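/- arXiv:1511.04499 — 7 statements merged into one kernel-verified Lean document; each statement's English description precedes it below -/
import Mathlib

section
/- Equivariant Gromov non-squeezing (key step of Proposition 1.1): let k, m, n be integers with 1 ≤ k ≤ m ≤ n and let r > 1. Then there is no symplectic ℝ^k-embedding of the ball B^{2m}(r) into the cylinder Z^{2n}; that is, there is no C^∞ injective map ρ : B^{2m}(r) → Z^{2n} satisfying ω_n(Dρ(z)u, Dρ(z)v) = ω_m(u,v) for all z ∈ B^{2m}(r) and u,v ∈ ℂ^m, together with a linear automorphism Λ of ℝ^k such that ρ(φ(t,z)) = φ(Λt, ρ(z)) for all t ∈ ℝ^k and z ∈ B^{2m}(r), where φ denotes the standard ℝ^k-actions on ℂ^m and ℂ^n. -/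
/-!
Statement 0: Equivariant Gromov non-squeezing.
For integers 1 ≤ k ≤ m ≤ n and r > 1, there is no symplectic ℝ^k-embedding of the
ball B^{2m}(r) ⊆ ℂ^m into the cylinder Z^{2n} ⊆ ℂ^n.
-/

noncomputable section

/-- The standard symplectic form on `ℂ^N`: the imaginary part of the Hermitian inner
product (conjugate-linear in the first argument). -/
def symplForm {N : ℕ} (u v : EuclideanSpace ℂ (Fin N)) : ℝ :=
  (inner ℂ u v : ℂ).im

/-- The standard action of `ℝ^k` on `ℂ^m` (for `k ≤ m`): rotation of the first `k`
coordinates, `φ(t,z) = (e^{2it₁}z₁, …, e^{2it_k}z_k, z_{k+1}, …, z_m)`. -/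
def stdAction (k : ℕ) {m : ℕ} (t : Fin k → ℝ) (z : EuclideanSpace ℂ (Fin m)) :
    EuclideanSpace ℂ (Fin m) :=
  WithLp.toLp 2 (fun (i : Fin m) => if h : (i : ℕ) < k then
    Complex.exp ((2 * t ⟨i, h⟩ : ℝ) * Complex.I) * z i
  else z i)

/-- The open cylinder `Z^{2n} = {z ∈ ℂ^n : |z₁| < 1}`. -/
def cylinder (n : ℕ) : Set (EuclideanSpace ℂ (Fin n)) :=
  {z | ∀ i : Fin n, (i : ℕ) = 0 → ‖z i‖ < 1}

lemma smul_single' {m : ℕ} (w a : ℂ) (i : Fin m) :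
    w • EuclideanSpace.single i a = EuclideanSpace.single i (w * a) := by
  ext j
  simp only [PiLp.smul_apply, EuclideanSpace.single_apply, smul_eq_mul]
  split <;> simp

lemma stdAction_line {k m : ℕ} (hkm : k ≤ m) (t : Fin k → ℝ) (j₀ : Fin k) (w : ℂ) :
    stdAction k t (w • EuclideanSpace.single (Fin.castLE hkm j₀) (1:ℂ)) =
      (Complex.exp ((2 * t j₀ : ℝ) * Complex.I) * w) •
        EuclideanSpace.single (Fin.castLE hkm j₀) (1:ℂ) := by
  ext j
  simp only [stdAction, PiLp.smul_apply, EuclideanSpace.single_apply, smul_eq_mul]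
  by_cases hj : j = Fin.castLE hkm j₀
  · subst hj
    have h : ((Fin.castLE hkm j₀ : Fin m) : ℕ) < k := j₀.isLt
    rw [dif_pos h]
    have he : (⟨((Fin.castLE hkm j₀ : Fin m) : ℕ), h⟩ : Fin k) = j₀ := by
      ext; simp
    rw [he, if_pos rfl]
    ring
  · rw [if_neg hj]
    split <;> simp

lemma stdAction_e1 {k n : ℕ} (hk : 1 ≤ k) (s : ℝ) (w : EuclideanSpace ℂ (Fin n)) (i : Fin n) :
    stdAction k (s • (Pi.single (⟨0, hk⟩ : Fin k) (1:ℝ) : Fin k → ℝ)) w i =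
      if (i : ℕ) = 0 then Complex.exp ((2 * s : ℝ) * Complex.I) * w i else w i := by
  simp only [stdAction]
  by_cases hi : (i : ℕ) < k
  · rw [dif_pos hi]
    by_cases h0 : (i : ℕ) = 0
    · rw [if_pos h0]
      have : (⟨(i : ℕ), hi⟩ : Fin k) = ⟨0, hk⟩ := by ext; simp [h0]
      rw [this]
      norm_num
    · rw [if_neg h0]
      have : (⟨(i : ℕ), hi⟩ : Fin k) ≠ (⟨0, hk⟩ : Fin k) := by
        simp [Fin.ext_iff, h0]
      rw [Pi.smul_apply, Pi.single_apply, if_neg this]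
      norm_num
  · rw [dif_neg hi, if_neg (by omega)]


set_option maxHeartbeats 1000000 in
/-- There is no symplectic `ℝ^k`-embedding of `B^{2m}(r)` into `Z^{2n}` when `r > 1`. -/
theorem equivariant_gromov_nonsqueezing
    (k m n : ℕ) (hk : 1 ≤ k) (hkm : k ≤ m) (hmn : m ≤ n)
    (r : ℝ) (hr : 1 < r)
    (ρ : EuclideanSpace ℂ (Fin m) → EuclideanSpace ℂ (Fin n))
    (hsmooth : ContDiffOn ℝ (⊤ : ℕ∞) ρ (Metric.ball 0 r))
    (hinj : Set.InjOn ρ (Metric.ball 0 r))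
    (hmaps : Set.MapsTo ρ (Metric.ball 0 r) (cylinder n))
    (hsymp : ∀ z ∈ Metric.ball (0 : EuclideanSpace ℂ (Fin m)) r,
      ∀ u v : EuclideanSpace ℂ (Fin m),
        symplForm (fderiv ℝ ρ z u) (fderiv ℝ ρ z v) = symplForm u v)
    (Λ : (Fin k → ℝ) ≃ₗ[ℝ] (Fin k → ℝ))
    (hequiv : ∀ (t : Fin k → ℝ), ∀ z ∈ Metric.ball (0 : EuclideanSpace ℂ (Fin m)) r,
      ρ (stdAction k t z) = stdAction k (Λ t) (ρ z)) :
    False := by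
  classical
  have hr0 : (0:ℝ) < r := lt_trans one_pos hr
  have hm1 : 1 ≤ m := le_trans hk hkm
  have hn1 : 1 ≤ n := le_trans hm1 hmn
  set K0 : Fin k := ⟨0, hk⟩ with hK0
  set N0 : Fin n := ⟨0, hn1⟩ with hN0
  set e1 : Fin k → ℝ := Pi.single K0 1 with he1
  set τ : Fin k → ℝ := Λ.symm e1 with hτdef
  obtain ⟨j₀, hj₀⟩ : ∃ j, τ j ≠ 0 := by
    by_contra h
    push_neg at h
    have hτ0 : τ = 0 := funext h
    have : e1 = 0 := by
      have := Λ.apply_symm_apply e1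
      rw [← hτdef, hτ0, map_zero] at this
      exact this.symm
    have h1 := congrFun this K0
    simp [he1] at h1
  set c : ℝ := 2 * τ j₀ with hcdef
  have hc : c ≠ 0 := mul_ne_zero two_ne_zero hj₀
  set J : Fin m := Fin.castLE hkm j₀ with hJ
  set E : EuclideanSpace ℂ (Fin m) := EuclideanSpace.single J 1 with hE
  have hEnorm : ‖E‖ = 1 := by rw [hE, EuclideanSpace.norm_single]; simp
  have hball : ∀ w : ℂ, ‖w‖ < r →
      w • E ∈ Metric.ball (0:EuclideanSpace ℂ (Fin m)) r := by
    intro w hw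
    rw [mem_ball_zero_iff, norm_smul, hEnorm, mul_one]
    exact hw
  -- specialized equivariance
  have hequiv' : ∀ (s : ℝ) (w : ℂ), ‖w‖ < r →
      ρ ((Complex.exp ((c * s : ℝ) * Complex.I) * w) • E) =
        stdAction k (s • e1) (ρ (w • E)) := by
    intro s w hw
    have hmem := hball w hw
    have h1 := hequiv (s • τ) (w • E) hmem
    have h2 : Λ (s • τ) = s • e1 := by rw [hτdef, map_smul, Λ.apply_symm_apply]
    rw [h2] at h1
    rw [hE, hJ] at h1 ⊢
    rw [stdAction_line hkm (s • τ) j₀ w] at h1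
    have h3 : (2 * (s • τ) j₀ : ℝ) = c * s := by
      simp only [Pi.smul_apply, smul_eq_mul, hcdef]; ring
    rw [h3] at h1
    exact h1
  -- ρ(0) has vanishing first coordinate
  have hρ00 : ρ 0 N0 = 0 := by
    have h := hequiv' (Real.pi / 2) 0 (by simpa using hr0)
    rw [mul_zero, zero_smul] at h
    have h2 := congrArg (fun v => v N0) h
    rw [he1, hK0, stdAction_e1 hk] at h2
    rw [if_pos rfl] at h2
    rw [show (2 * (Real.pi / 2) : ℝ) = Real.pi from by ring, Complex.exp_pi_mul_I] at h2
    have h3 : (2:ℂ) * (ρ 0 N0) = 0 := by linear_combination h2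
    have h4 := mul_eq_zero.mp h3
    simpa using h4
  -- differentiability
  have hdiff : ∀ z ∈ Metric.ball (0:EuclideanSpace ℂ (Fin m)) r, DifferentiableAt ℝ ρ z := by
    intro z hz
    exact (hsmooth.contDiffAt (Metric.isOpen_ball.mem_nhds hz)).differentiableAt (by simp)
  -- chain rule along complex curves in the line ℂ·E
  have hchain : ∀ (w : ℝ → ℂ) (w' : ℂ) (y₀ : ℝ), HasDerivAt w w' y₀ → ‖w y₀‖ < r →
      HasDerivAt (fun y => ρ (w y • E)) (fderiv ℝ ρ (w y₀ • E) (w' • E)) y₀ := by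
    intro w w' y₀ hw hmem
    have h1 : HasDerivAt (fun y => w y • E) (w' • E) y₀ := by
      have h2 := ((((ContinuousLinearMap.id ℂ ℂ).smulRight E).restrictScalars
        ℝ).hasFDerivAt (x := w y₀)).comp_hasDerivAt y₀ hw
      simpa [Function.comp_def] using h2
    have h3 := ((hdiff _ (hball _ hmem)).hasFDerivAt).comp_hasDerivAt y₀ h1
    simpa [Function.comp_def] using h3
  have hchaini : ∀ (w : ℝ → ℂ) (w' : ℂ) (y₀ : ℝ) (i : Fin n), HasDerivAt w w' y₀ →
      ‖w y₀‖ < r →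
      HasDerivAt (fun y => ρ (w y • E) i) (fderiv ℝ ρ (w y₀ • E) (w' • E) i) y₀ := by
    intro w w' y₀ i hw hmem
    have h1 := hchain w w' y₀ hw hmem
    have h2 := ((EuclideanSpace.proj i).restrictScalars ℝ).hasFDerivAt.comp_hasDerivAt y₀ h1
    exact h2
  have hexpD : ∀ b : ℝ, HasDerivAt (fun s : ℝ => Complex.exp ((b * s : ℝ) * Complex.I))
      ((b:ℂ) * Complex.I) 0 := by
    intro b
    have h1 : HasDerivAt (fun s : ℝ => ((s:ℝ):ℂ)) 1 0 := by
      simpa using (hasDerivAt_id (0:ℝ)).ofReal_comp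
    have h2 := ((h1.const_mul (b:ℂ)).mul_const Complex.I).cexp
    have h3 : (fun s : ℝ => Complex.exp (((b * s : ℝ) : ℂ) * Complex.I)) =
        fun s : ℝ => Complex.exp (((b:ℂ) * (s:ℂ)) * Complex.I) := by
      funext s; congr 1; push_cast; ring
    rw [h3]
    simpa using h2
  -- KEY1: the image of the rotation vector field
  have KEY1 : ∀ x : ℝ, |x| < r →
      fderiv ℝ ρ ((x:ℂ) • E) ((((c:ℂ) * Complex.I * (x:ℂ))) • E) =
        EuclideanSpace.single N0 (2 * Complex.I * (ρ ((x:ℂ) • E) N0)) := by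
    intro x hx
    have hxc : ‖(x:ℂ)‖ < r := by simpa using hx
    have hw : HasDerivAt (fun s : ℝ => Complex.exp ((c * s : ℝ) * Complex.I) * (x:ℂ))
        ((c:ℂ) * Complex.I * (x:ℂ)) 0 := (hexpD c).mul_const (x:ℂ)
    have h1 := hchain _ _ 0 hw (by simpa using hx)
    simp only [mul_zero, Complex.ofReal_zero, zero_mul, Complex.exp_zero, one_mul] at h1
    have hfeq : (fun s : ℝ => ρ ((Complex.exp ((c * s : ℝ) * Complex.I) * (x:ℂ)) • E)) =
        fun s : ℝ => ρ ((x:ℂ) • E) +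
          (Complex.exp ((2 * s : ℝ) * Complex.I) - 1) •
            EuclideanSpace.single N0 (ρ ((x:ℂ) • E) N0) := by
      funext s
      rw [hequiv' s (x:ℂ) hxc]
      ext i
      rw [he1, hK0, stdAction_e1 hk]
      rw [PiLp.add_apply, PiLp.smul_apply, EuclideanSpace.single_apply]
      by_cases h0 : (i:ℕ) = 0
      · rw [if_pos h0]
        have hiN : i = N0 := by rw [hN0]; exact Fin.ext h0
        rw [if_pos hiN, hiN]
        ring_nf
      · rw [if_neg h0, if_neg (by rw [hN0]; exact fun hh => h0 (by rw [hh])), smul_zero, add_zero]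
    have hlin2 : HasDerivAt
        (fun s : ℝ => Complex.exp ((2 * s : ℝ) * Complex.I) - 1) (2 * Complex.I) 0 := by
      simpa using (hexpD 2).sub_const 1
    have h2 := (hlin2.smul_const (EuclideanSpace.single N0 (ρ ((x:ℂ) • E) N0))).const_add
      (ρ ((x:ℂ) • E))
    rw [hfeq] at h1
    have h4 := h1.unique h2
    rw [h4, smul_single']
  -- KEY2: radial derivative identity from the symplectic condition
  have KEY2 : ∀ x : ℝ, |x| < r →
      ((starRingEnd ℂ) (ρ ((x:ℂ) • E) N0) * (fderiv ℝ ρ ((x:ℂ) • E) E N0)).re = (c/2) * x := by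
    intro x hx
    have hs := hsymp ((x:ℂ) • E) (hball _ (by simpa using hx))
      (((c:ℂ) * Complex.I * (x:ℂ)) • E) E
    rw [KEY1 x hx] at hs
    rw [symplForm, symplForm, EuclideanSpace.inner_single_left, inner_smul_left] at hs
    have hEE : (inner ℂ E E : ℂ) = 1 := by
      rw [hE, EuclideanSpace.inner_single_left, EuclideanSpace.single_apply, if_pos rfl]
      simp
    rw [hEE, mul_one] at hs
    set a := ρ ((x:ℂ) • E) N0
    set W := fderiv ℝ ρ ((x:ℂ) • E) E N0 with hW
    have e2 : (starRingEnd ℂ) (2 * Complex.I * a) * W =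
        -2 * Complex.I * ((starRingEnd ℂ) a * W) := by
      rw [map_mul, map_mul, Complex.conj_I, map_ofNat]
      ring
    have e3 : (starRingEnd ℂ) ((c:ℂ) * Complex.I * (x:ℂ)) =
        -Complex.I * ((c:ℝ) * x : ℝ) := by
      rw [map_mul, map_mul, Complex.conj_I, Complex.conj_ofReal, Complex.conj_ofReal]
      push_cast
      ring
    rw [e2, e3] at hs
    have e4 : (-2 * Complex.I * ((starRingEnd ℂ) a * W)).im =
        -2 * ((starRingEnd ℂ) a * W).re := by
      simp [Complex.mul_im, Complex.mul_re]
      try ring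
    have e5 : (-Complex.I * ((c:ℝ) * x : ℝ)).im = -(c * x) := by
      simp [Complex.mul_im]
    rw [e4, e5] at hs
    linarith
  -- the scalar curve g
  set g : ℝ → ℂ := fun x => ρ ((x:ℂ) • E) N0 with hgdef
  have hg : ∀ x : ℝ, |x| < r → HasDerivAt g (fderiv ℝ ρ ((x:ℂ) • E) E N0) x := by
    intro x hx
    have := hchaini (fun y : ℝ => (y:ℂ)) 1 x N0
      (by simpa using (hasDerivAt_id x).ofReal_comp) (by simpa using hx)
    simpa [one_smul, hgdef] using this
  -- moment map identity along the ray
  have hG : ∀ x : ℝ, 0 ≤ x → x < r → Complex.normSq (g x) = (c/2) * x^2 := by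
    have hF' : ∀ y : ℝ, |y| < r →
        HasDerivAt (fun t => Complex.normSq (g t) - (c/2) * t^2) 0 y := by
      intro y hy
      have hgy := hg y hy
      set W := fderiv ℝ ρ ((y:ℂ) • E) E N0 with hW
      have hre : HasDerivAt (fun t => (g t).re) W.re y :=
        Complex.reCLM.hasFDerivAt.comp_hasDerivAt y hgy
      have him : HasDerivAt (fun t => (g t).im) W.im y :=
        Complex.imCLM.hasFDerivAt.comp_hasDerivAt y hgy
      have hsq : HasDerivAt (fun t => Complex.normSq (g t))
          (W.re * (g y).re + (g y).re * W.re + (W.im * (g y).im + (g y).im * W.im)) y := by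
        have h5 := (hre.mul hre).add (him.mul him)
        have hne : (fun t => Complex.normSq (g t)) =
            fun t => (g t).re * (g t).re + (g t).im * (g t).im := by
          funext t; rw [Complex.normSq_apply]
        rw [hne]; exact h5
      have hpw : HasDerivAt (fun t : ℝ => (c/2) * t^2) ((c/2) * (2 * y)) y := by
        simpa using (hasDerivAt_pow 2 y).const_mul (c/2)
      have hkey := KEY2 y hy
      have hrear : ((starRingEnd ℂ) (g y) * W).re = (g y).re * W.re + (g y).im * W.im := by
        simp [Complex.mul_re]
        try ring
      have hzero : (W.re * (g y).re + (g y).re * W.re + (W.im * (g y).im + (g y).im * W.im))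
          - (c/2) * (2 * y) = 0 := by
        rw [hrear] at hkey
        nlinarith [hkey]
      have h6 := hsq.sub hpw
      rw [hzero] at h6
      exact h6
    intro x hx0 hxr
    have habsr : ∀ y : ℝ, y ∈ Set.Icc 0 x → |y| < r := by
      intro y hy
      rw [abs_lt]
      constructor
      · linarith [hy.1]
      · linarith [hy.2]
    have hcont : ContinuousOn (fun t => Complex.normSq (g t) - (c/2) * t^2) (Set.Icc 0 x) :=
      fun y hy => ((hF' y (habsr y hy)).continuousAt).continuousWithinAt
    have hconst := constant_of_has_deriv_right_zero hcont
      (fun y hy => (hF' y (habsr y ⟨hy.1, le_of_lt hy.2⟩)).hasDerivWithinAt)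
      x (Set.mem_Icc.2 ⟨hx0, le_refl x⟩)
    have hg0 : g 0 = 0 := by
      rw [hgdef]
      simp only [Complex.ofReal_zero, zero_smul]
      exact hρ00
    rw [hg0] at hconst
    simp only [Complex.normSq_zero] at hconst
    nlinarith [hconst]
  -- bounds on c/2
  have hnormlt : ∀ x : ℝ, 0 ≤ x → x < r → Complex.normSq (g x) < 1 := by
    intro x hx0 hxr
    have hmem := hmaps (hball (x:ℂ) (by simpa [_root_.abs_of_nonneg hx0] using hxr))
    have h2 : ‖g x‖ < 1 := hmem N0 rfl
    rw [Complex.normSq_eq_norm_sq]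
    have h3 : 0 ≤ ‖g x‖ := norm_nonneg _
    nlinarith
  have hcpos : 0 < c / 2 := by
    have h1 := hG 1 zero_le_one (by linarith)
    have h2 : 0 ≤ Complex.normSq (g 1) := Complex.normSq_nonneg _
    have h3 : c / 2 ≠ 0 := by
      intro h; exact hc (by linarith)
    rw [h1] at h2
    rcases h3.lt_or_gt with h | h
    · nlinarith
    · exact h
  have hclt : c / 2 < 1 := by
    set x : ℝ := (1 + r) / 2 with hxdef
    have hx0 : 0 ≤ x := by rw [hxdef]; linarith
    have hxr : x < r := by rw [hxdef]; linarith
    have hx1 : 1 < x := by rw [hxdef]; linarith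
    have h1 := hnormlt x hx0 hxr
    rw [hG x hx0 hxr] at h1
    nlinarith
  -- derivative at 0
  set L := fderiv ℝ ρ 0 with hL
  have hg00 : g 0 = 0 := by
    rw [hgdef]
    simp only [Complex.ofReal_zero, zero_smul]
    exact hρ00
  have habs : ‖L E N0‖ = Real.sqrt (c/2) := by
    have hg0 : HasDerivAt g (L E N0) 0 := by
      have h1 := hg 0 (by simpa using hr0)
      rw [hL]
      simpa using h1
    rw [hasDerivAt_iff_tendsto_slope] at hg0
    have hg0' : Filter.Tendsto (slope g 0) (nhdsWithin 0 (Set.Ioi 0)) (nhds (L E N0)) :=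
      hg0.mono_left (nhdsWithin_mono 0 (fun y hy => by
        simp only [Set.mem_compl_iff, Set.mem_singleton_iff]
        exact ne_of_gt hy))
    have habs1 : Filter.Tendsto (fun y => ‖slope g 0 y‖)
        (nhdsWithin 0 (Set.Ioi 0)) (nhds ‖L E N0‖) :=
      (continuous_norm.tendsto _).comp hg0'
    have hev : (fun y => ‖slope g 0 y‖) =ᶠ[nhdsWithin 0 (Set.Ioi 0)]
        (fun _ => Real.sqrt (c/2)) := by
      filter_upwards [Ioo_mem_nhdsGT_of_mem (Set.mem_Ico.2 ⟨le_refl (0:ℝ), hr0⟩)] with y hy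
      have hy0 : 0 < y := hy.1
      have hyr : y < r := hy.2
      have hsl : slope g 0 y = (y:ℝ)⁻¹ • (g y - g 0) := by
        simp [slope]
      rw [hsl, hg00, sub_zero]
      have habsy : ‖g y‖ = Real.sqrt (c/2) * y := by
        have h2 : Complex.normSq (g y) = (c/2) * y^2 := hG y (le_of_lt hy0) hyr
        rw [Complex.norm_def, h2, Real.sqrt_mul (le_of_lt hcpos), Real.sqrt_sq (le_of_lt hy0)]
      have : ‖(y:ℝ)⁻¹ • g y‖ = |y⁻¹| * ‖g y‖ := by
        rw [norm_smul, Real.norm_eq_abs]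
      rw [this, habsy, abs_of_pos (inv_pos.2 hy0)]
      field_simp
    have hlim2 : Filter.Tendsto (fun _ : ℝ => Real.sqrt (c/2))
        (nhdsWithin 0 (Set.Ioi 0)) (nhds (Real.sqrt (c/2))) := tendsto_const_nhds
    exact tendsto_nhds_unique (Filter.Tendsto.congr' hev habs1) hlim2
  -- rotation relations for L
  have hrot : ∀ (s : ℝ) (i : Fin n),
      L ((Complex.exp ((c * s : ℝ) * Complex.I)) • E) i =
        if (i : ℕ) = 0 then Complex.exp ((2 * s : ℝ) * Complex.I) * (L E i) else L E i := by
    intro s i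
    have h2base : HasDerivAt (fun x : ℝ => ρ ((x:ℂ) • E) i) (L E i) 0 := by
      have h1 := hchaini (fun y : ℝ => (y:ℂ)) 1 0 i
        (by simpa using (hasDerivAt_id (0:ℝ)).ofReal_comp) (by simpa using hr0)
      rw [hL]
      simpa using h1
    have hw : HasDerivAt (fun x : ℝ => Complex.exp ((c * s : ℝ) * Complex.I) * (x:ℂ))
        (Complex.exp ((c * s : ℝ) * Complex.I)) 0 := by
      have h1 : HasDerivAt (fun y : ℝ => ((y:ℝ):ℂ)) 1 0 := by
        simpa using (hasDerivAt_id (0:ℝ)).ofReal_comp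
      simpa using h1.const_mul (Complex.exp ((c * s : ℝ) * Complex.I))
    have h1 := hchaini _ _ 0 i hw (by simpa using hr0)
    simp only [Complex.ofReal_zero, mul_zero, zero_smul] at h1
    have hf2eq : (fun x : ℝ => ρ ((Complex.exp ((c * s : ℝ) * Complex.I) * (x:ℂ)) • E) i)
        =ᶠ[nhds 0] (fun x : ℝ => if (i:ℕ) = 0 then
          Complex.exp ((2 * s : ℝ) * Complex.I) * ρ ((x:ℂ) • E) i else ρ ((x:ℂ) • E) i) := by
      have hev : ∀ᶠ x : ℝ in nhds 0, |x| < r := by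
        have h3 : Filter.Tendsto (fun x : ℝ => |x|) (nhds 0) (nhds |(0:ℝ)|) :=
          (continuous_abs.tendsto 0)
        simp only [abs_zero] at h3
        exact h3.eventually_lt_const hr0
      filter_upwards [hev] with x hx
      rw [hequiv' s (x:ℂ) (by simpa using hx)]
      rw [he1, hK0, stdAction_e1 hk]
    have h2 : HasDerivAt (fun x : ℝ => if (i:ℕ) = 0 then
        Complex.exp ((2 * s : ℝ) * Complex.I) * ρ ((x:ℂ) • E) i else ρ ((x:ℂ) • E) i)
        (if (i:ℕ) = 0 then Complex.exp ((2 * s : ℝ) * Complex.I) * (L E i) else L E i) 0 := by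
      by_cases h0 : (i:ℕ) = 0
      · simp only [if_pos h0]
        exact h2base.const_mul _
      · simp only [if_neg h0]
        exact h2base
    have h3 := (h1.congr_of_eventuallyEq hf2eq.symm).unique h2
    rw [hL]
    exact h3
  have hvanish : ∀ i : Fin n, (i : ℕ) ≠ 0 → L E i = 0 := by
    intro i hi
    have h := hrot (Real.pi / c) i
    rw [if_neg hi] at h
    have he' : Complex.exp ((c * (Real.pi / c) : ℝ) * Complex.I) = -1 := by
      rw [show (c * (Real.pi / c) : ℝ) = Real.pi from by field_simp]
      exact Complex.exp_pi_mul_I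
    rw [he'] at h
    rw [show ((-1 : ℂ) • E) = -E from by rw [neg_one_smul], map_neg] at h
    have h2 : -(L E i) = L E i := by
      simpa using h
    have h3 : (2:ℂ) * (L E i) = 0 := by linear_combination - h2
    have h4 := mul_eq_zero.mp h3
    simpa using h4
  have heI : Complex.exp ((c * (Real.pi / (2*c)) : ℝ) * Complex.I) = Complex.I := by
    rw [show (c * (Real.pi / (2*c)) : ℝ) = Real.pi / 2 from by field_simp]
    rw [Complex.exp_mul_I, ← Complex.ofReal_cos, ← Complex.ofReal_sin]
    simp [Real.cos_pi_div_two, Real.sin_pi_div_two]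
  have hIvanish : ∀ i : Fin n, (i : ℕ) ≠ 0 → L (Complex.I • E) i = 0 := by
    intro i hi
    have h := hrot (Real.pi / (2*c)) i
    rw [if_neg hi, heI] at h
    exact h.trans (hvanish i hi)
  have hIabs : ‖L (Complex.I • E) N0‖ = Real.sqrt (c/2) := by
    have h := hrot (Real.pi / (2*c)) N0
    rw [if_pos rfl, heI] at h
    rw [h, norm_mul, Complex.norm_exp_ofReal_mul_I, one_mul, habs]
  -- final contradiction
  have h0ball : (0:EuclideanSpace ℂ (Fin m)) ∈ Metric.ball 0 r := by
    rw [mem_ball_zero_iff, norm_zero]; exact hr0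
  have hfin := hsymp 0 h0ball E (Complex.I • E)
  rw [← hL] at hfin
  have hRHS : symplForm E (Complex.I • E) = 1 := by
    rw [hE, symplForm, smul_single', mul_one, EuclideanSpace.inner_single_left]
    simp [EuclideanSpace.single_apply]
  have hLHS : symplForm (L E) (L (Complex.I • E)) =
      ((starRingEnd ℂ) (L E N0) * (L (Complex.I • E) N0)).im := by
    rw [symplForm, PiLp.inner_apply]
    rw [Finset.sum_eq_single N0]
    · simp [RCLike.inner_apply]; ring
    · intro i _ hi
      rw [hIvanish i (by simpa [hN0, Fin.ext_iff] using hi)]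
      simp
    · simp
  have hbound : |((starRingEnd ℂ) (L E N0) * (L (Complex.I • E) N0)).im| ≤ c/2 := by
    calc |((starRingEnd ℂ) (L E N0) * (L (Complex.I • E) N0)).im|
        ≤ ‖(starRingEnd ℂ) (L E N0) * (L (Complex.I • E) N0)‖ :=
          Complex.abs_im_le_norm _
      _ = Real.sqrt (c/2) * Real.sqrt (c/2) := by
          rw [norm_mul, Complex.norm_conj, habs, hIabs]
      _ = c/2 := Real.mul_self_sqrt (le_of_lt hcpos)
  rw [hRHS, hLHS] at hfin
  rw [hfin] at hbound
  simp at hbound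
  linarith
end
end

section
/- Lemma 3.2 (infinitesimal freeness versus discrete stabilizer): let M be a smooth (C^∞) finite-dimensional real manifold without boundary and let φ : ℝ^n × M → M be a C^∞ action of the additive group ℝ^n on M (so φ(0,p) = p and φ(s+t,p) = φ(s, φ(t,p)); equivalently, φ is the action obtained by composing the flows ψ₁^{t₁} ∘ ⋯ ∘ ψ_n^{t_n} of n complete commuting smooth vector fields X₁, …, X_n). For p ∈ M set ξ_i(p) = (d/dt)|_{t=0} φ(t e_i, p) ∈ T_pM, where e₁, …, e_n is the standard basis of ℝ^n (so ξ_i(p) = X_i(p)). Then the vectors ξ₁(p), …, ξ_n(p) are linearly independent in T_pM if and only if the stabilizer {t ∈ ℝ^n : φ(t,p) = p}, an additive subgroup of ℝ^n, is discrete. -/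
/-!
Statement 4 (Lemma 3.2): for a smooth action φ of ℝ^n on a smooth manifold M and p ∈ M,
the infinitesimal generators ξ₁(p), …, ξ_n(p) are linearly independent in T_pM if and
only if the stabilizer {t ∈ ℝ^n : φ(t,p) = p} is discrete.
-/

noncomputable section

open scoped Manifold

open Set Function Topology

set_option maxHeartbeats 1000000 in
theorem linearIndependent_generators_iff_discrete_stabilizer
    {E : Type*} [NormedAddCommGroup E] [NormedSpace ℝ E] [FiniteDimensional ℝ E]
    {M : Type*} [TopologicalSpace M] [ChartedSpace E M]
    [IsManifold (modelWithCornersSelf ℝ E) (⊤ : ℕ∞) M]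
    (n : ℕ) (φ : (Fin n → ℝ) → M → M)
    (hsmooth : ContMDiff
      ((modelWithCornersSelf ℝ (Fin n → ℝ)).prod (modelWithCornersSelf ℝ E))
      (modelWithCornersSelf ℝ E) (⊤ : ℕ∞)
      (fun q : (Fin n → ℝ) × M => φ q.1 q.2))
    (hzero : ∀ p : M, φ 0 p = p)
    (hadd : ∀ (s t : Fin n → ℝ) (p : M), φ (s + t) p = φ s (φ t p))
    (p : M) :
    LinearIndependent ℝ (fun i : Fin n =>
      (mfderiv (modelWithCornersSelf ℝ ℝ) (modelWithCornersSelf ℝ E)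
        (fun s : ℝ => φ (Pi.single i s) p) 0 (1 : ℝ) : E))
    ↔ DiscreteTopology {t : Fin n → ℝ // φ t p = p} := by
  classical
  -- The orbit map `F`
  set F : (Fin n → ℝ) → M := fun t => φ t p with hFdef
  have hF : ContMDiff 𝓘(ℝ, Fin n → ℝ) 𝓘(ℝ, E) (⊤ : ℕ∞) F :=
    hsmooth.comp (contMDiff_id.prodMk contMDiff_const)
  have hFp : F 0 = p := hzero p
  set dF : (Fin n → ℝ) →L[ℝ] E := mfderiv 𝓘(ℝ, Fin n → ℝ) 𝓘(ℝ, E) F 0 with hdF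
  have hFder : HasMFDerivAt 𝓘(ℝ, Fin n → ℝ) 𝓘(ℝ, E) F 0 dF :=
    ((hF 0).mdifferentiableAt (by simp)).hasMFDerivAt
  -- derivative of `F` at any point, via equivariance
  have hFs : ∀ s : Fin n → ℝ,
      HasMFDerivAt 𝓘(ℝ, Fin n → ℝ) 𝓘(ℝ, E) F s
        ((mfderiv 𝓘(ℝ, E) 𝓘(ℝ, E) (φ s) p).comp dF) := by
    intro s
    have hA : ContMDiff 𝓘(ℝ, E) 𝓘(ℝ, E) (⊤ : ℕ∞) (φ s) :=
      hsmooth.comp (contMDiff_const.prodMk contMDiff_id)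
    have hAd : HasMFDerivAt 𝓘(ℝ, E) 𝓘(ℝ, E) (φ s) p
        (mfderiv 𝓘(ℝ, E) 𝓘(ℝ, E) (φ s) p) :=
      ((hA p).mdifferentiableAt (by simp)).hasMFDerivAt
    have hT : HasMFDerivAt 𝓘(ℝ, Fin n → ℝ) 𝓘(ℝ, Fin n → ℝ) (fun u => u - s) s
        (ContinuousLinearMap.id ℝ (Fin n → ℝ)) := by
      apply HasFDerivAt.hasMFDerivAt
      have : HasFDerivAt (fun u : Fin n → ℝ => u - s)
          (ContinuousLinearMap.id ℝ (Fin n → ℝ)) s := (hasFDerivAt_id s).sub_const s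
      exact this
    have hF0 : HasMFDerivAt 𝓘(ℝ, Fin n → ℝ) 𝓘(ℝ, E) F (s - s) dF := by
      rw [sub_self]; exact hFder
    have hcomp1 : HasMFDerivAt 𝓘(ℝ, Fin n → ℝ) 𝓘(ℝ, E) (F ∘ fun u => u - s) s
        (dF.comp (ContinuousLinearMap.id ℝ (Fin n → ℝ))) := HasMFDerivAt.comp s hF0 hT
    have hAd' : HasMFDerivAt 𝓘(ℝ, E) 𝓘(ℝ, E) (φ s) (F (s - s))
        (mfderiv 𝓘(ℝ, E) 𝓘(ℝ, E) (φ s) p) := by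
      rw [sub_self, hFp]; exact hAd
    have hcomp2 : HasMFDerivAt 𝓘(ℝ, Fin n → ℝ) 𝓘(ℝ, E) ((φ s) ∘ (F ∘ fun u => u - s)) s
        ((mfderiv 𝓘(ℝ, E) 𝓘(ℝ, E) (φ s) p).comp
          (dF.comp (ContinuousLinearMap.id ℝ (Fin n → ℝ)))) := by
      exact HasMFDerivAt.comp s hAd' hcomp1
    have heq : ((φ s) ∘ (F ∘ fun u => u - s)) = F := by
      funext u
      show φ s (φ (u - s) p) = φ u p
      rw [← hadd]
      congr 1
      abel
    rw [heq] at hcomp2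
    have hid : dF.comp (ContinuousLinearMap.id ℝ (Fin n → ℝ)) = dF :=
      ContinuousLinearMap.ext fun x => rfl
    exact hcomp2.congr_mfderiv (ContinuousLinearMap.ext fun x => rfl)
  -- the generators are `dF (Pi.single i 1)`
  have hxi : ∀ i : Fin n,
      (mfderiv (modelWithCornersSelf ℝ ℝ) (modelWithCornersSelf ℝ E)
        (fun s : ℝ => φ (Pi.single i s) p) 0 (1 : ℝ) : E) = dF (Pi.single i 1) := by
    intro i
    set L : ℝ →L[ℝ] (Fin n → ℝ) :=
      (ContinuousLinearMap.id ℝ ℝ).smulRight (Pi.single i 1) with hL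
    have hLd : HasMFDerivAt 𝓘(ℝ, ℝ) 𝓘(ℝ, Fin n → ℝ) (fun s : ℝ => s • (Pi.single i 1 : Fin n → ℝ)) 0 L :=
      (L.hasFDerivAt).hasMFDerivAt
    have hF0 : HasMFDerivAt 𝓘(ℝ, Fin n → ℝ) 𝓘(ℝ, E) F ((0:ℝ) • (Pi.single i 1 : Fin n → ℝ)) dF := by
      rw [zero_smul]; exact hFder
    have hcomp := HasMFDerivAt.comp (0:ℝ) hF0 hLd
    have heq : (F ∘ fun s : ℝ => s • (Pi.single i 1 : Fin n → ℝ)) = fun s : ℝ => φ (Pi.single i s) p := by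
      funext s
      show φ (s • (Pi.single i 1 : Fin n → ℝ)) p = φ (Pi.single i s) p
      congr 1
      rw [← Pi.single_smul, smul_eq_mul, mul_one]
    rw [heq] at hcomp
    rw [hcomp.mfderiv]
    show dF (L 1) = dF (Pi.single i 1)
    congr 1
    show (1:ℝ) • (Pi.single i 1 : Fin n → ℝ) = Pi.single i 1
    rw [one_smul]
  have hsum : ∀ x : Fin n → ℝ, ∑ i, x i • (Pi.single i 1 : Fin n → ℝ) = x := by
    intro x
    funext j
    simp [Finset.sum_apply, Pi.single_apply]
  -- linear independence iff injectivity of `dF`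
  have hinj_iff : LinearIndependent ℝ (fun i : Fin n => dF (Pi.single i 1)) ↔
      Function.Injective dF := by
    rw [Fintype.linearIndependent_iff]
    constructor
    · intro h
      refine (injective_iff_map_eq_zero dF).mpr fun x hx => ?_
      have hsx : ∑ i, x i • dF (Pi.single i 1) = 0 := by
        have : ∑ i, x i • dF (Pi.single i 1)
            = dF (∑ i, x i • (Pi.single i 1 : Fin n → ℝ)) := by
          rw [map_sum]; simp only [map_smul]
        rw [this, hsum x, hx]
      funext i
      exact h x hsx i
    · intro hinj g hg
      have : dF (∑ i, g i • (Pi.single i 1 : Fin n → ℝ)) = 0 := by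
        rw [map_sum]; simpa only [map_smul] using hg
      rw [hsum g] at this
      have hg0 : g = 0 := hinj (by rw [this, map_zero])
      intro i; rw [hg0]; rfl
  -- key3 : injectivity implies discreteness
  have key3 : Function.Injective dF → DiscreteTopology {t : Fin n → ℝ // φ t p = p} := by
    intro hinj
    have hpmem : p ∈ (chartAt E p).source := mem_chart_source E p
    have hpmem' : p ∈ (extChartAt 𝓘(ℝ, E) p).source := mem_extChartAt_source (I := 𝓘(ℝ, E)) p
    set Dc : E →L[ℝ] E := mfderiv 𝓘(ℝ, E) 𝓘(ℝ, E) (extChartAt 𝓘(ℝ, E) p) p with hDc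
    have hcd : HasMFDerivAt 𝓘(ℝ, E) 𝓘(ℝ, E) (extChartAt 𝓘(ℝ, E) p) p Dc := by
      have h0 := hasMFDerivAt_extChartAt (I := 𝓘(ℝ, E)) hpmem
      rw [hDc, h0.mfderiv]
      exact h0
    have hDcinj : Function.Injective Dc := by
      have hlem := mfderivWithin_extChartAt_symm_comp_mfderiv_extChartAt' (I := 𝓘(ℝ, E)) hpmem'
      have hli : Function.LeftInverse
          (mfderivWithin 𝓘(ℝ, E) 𝓘(ℝ, E) (extChartAt 𝓘(ℝ, E) p).symm
            (range (𝓘(ℝ, E))) ((extChartAt 𝓘(ℝ, E) p) p)) Dc := fun x => by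
        have h := DFunLike.congr_fun hlem x
        simp at h
        simp [hDc]
        exact h
      exact hli.injective
    set G : (Fin n → ℝ) → E := fun t => extChartAt 𝓘(ℝ, E) p (F t) with hG
    have hGder : HasFDerivAt G (Dc.comp dF) 0 := by
      have hcd' : HasMFDerivAt 𝓘(ℝ, E) 𝓘(ℝ, E) (extChartAt 𝓘(ℝ, E) p) (F 0) Dc := by
        rw [hFp]; exact hcd
      exact (HasMFDerivAt.comp 0 hcd' hFder).hasFDerivAt
    have hGc : ContDiffAt ℝ ((⊤ : ℕ∞) : WithTop ℕ∞) G 0 := by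
      have h1 := (contMDiffAt_iff.1 (hF 0)).2
      rw [hFp] at h1
      simp only [extChartAt_model_space_eq_id, PartialEquiv.refl_symm, PartialEquiv.refl_coe,
        Function.comp_id, CompTriple.comp_eq, modelWithCornersSelf_coe, Set.range_id, id_eq,
        contDiffWithinAt_univ] at h1
      exact h1
    have hDF_inj : Function.Injective (Dc.comp dF) := by
      intro a b hab
      exact hinj (hDcinj hab)
    obtain ⟨π, hπ⟩ := LinearMap.exists_leftInverse_of_injective
      ((Dc.comp dF) : (Fin n → ℝ) →ₗ[ℝ] E)
      (LinearMap.ker_eq_bot.mpr hDF_inj)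
    set πc : E →L[ℝ] (Fin n → ℝ) := LinearMap.toContinuousLinearMap π with hπc
    set k : (Fin n → ℝ) → (Fin n → ℝ) := fun t => πc (G t) with hk
    have hkc : ContDiffAt ℝ ((⊤ : ℕ∞) : WithTop ℕ∞) k 0 := ((πc.contDiff).contDiffAt).comp 0 hGc
    have hkd : HasFDerivAt k (πc.comp (Dc.comp dF)) 0 := (πc.hasFDerivAt).comp 0 hGder
    have hkid : πc.comp (Dc.comp dF) = ContinuousLinearMap.id ℝ (Fin n → ℝ) := by
      refine ContinuousLinearMap.ext fun x => ?_
      have h := LinearMap.ext_iff.1 hπ x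
      simpa [πc, LinearMap.coe_toContinuousLinearMap'] using h
    set e : (Fin n → ℝ) ≃L[ℝ] (Fin n → ℝ) := ContinuousLinearEquiv.refl ℝ (Fin n → ℝ) with he
    have hstrict : HasStrictFDerivAt k (e : (Fin n → ℝ) →L[ℝ] (Fin n → ℝ)) 0 := by
      refine hkc.hasStrictFDerivAt' ?_ (by simp)
      have : (e : (Fin n → ℝ) →L[ℝ] (Fin n → ℝ)) = ContinuousLinearMap.id ℝ (Fin n → ℝ) := rfl
      rw [this, ← hkid]
      exact hkd
    obtain ⟨V, hV, hVs⟩ : ∃ V ∈ 𝓝 (0 : Fin n → ℝ), ∀ t ∈ V, φ t p = p → t = 0 := by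
      refine ⟨_, hstrict.eventually_left_inverse, ?_⟩
      intro t ht hφt
      have h0 : hstrict.localInverse k _ _ (k 0) = 0 :=
        hstrict.eventually_left_inverse.self_of_nhds
      have hkt : k t = k 0 := by
        show πc (extChartAt 𝓘(ℝ, E) p (F t)) = πc (extChartAt 𝓘(ℝ, E) p (F 0))
        rw [show F t = p from hφt, hFp]
      calc t = hstrict.localInverse k _ _ (k t) := ht.symm
        _ = hstrict.localInverse k _ _ (k 0) := by rw [hkt]
        _ = 0 := h0
    -- discreteness
    rw [discreteTopology_iff_isOpen_singleton]
    rintro ⟨γ, hγ⟩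
    have hnegγ : φ (-γ) p = p := by
      conv_lhs => rw [← hγ]
      rw [← hadd, neg_add_cancel, hzero]
    obtain ⟨U0, hU0V, hU0open, hU0mem⟩ := mem_nhds_iff.1 hV
    set O : Set (Fin n → ℝ) := (fun t => t - γ) ⁻¹' U0 with hO
    have hOopen : IsOpen O := hU0open.preimage (continuous_sub_right γ)
    have hsingle : {(⟨γ, hγ⟩ : {t : Fin n → ℝ // φ t p = p})} = Subtype.val ⁻¹' O := by
      apply Set.eq_of_subset_of_subset
      · rintro x hx
        rw [Set.mem_singleton_iff] at hx
        subst hx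
        show (γ : Fin n → ℝ) - γ ∈ U0
        rw [sub_self]; exact hU0mem
      · rintro ⟨t, hφt⟩ htO
        have htO' : t - γ ∈ U0 := htO
        have hstab : φ (t - γ) p = p := by
          rw [sub_eq_add_neg, hadd, hnegγ, hφt]
        have h0 := hVs (t - γ) (hU0V htO') hstab
        have ht : t = γ := by rwa [sub_eq_zero] at h0
        exact Set.mem_singleton_iff.2 (Subtype.ext ht)
    rw [hsingle]
    exact hOopen.preimage continuous_subtype_val
  -- key4 : a nonzero kernel vector implies non-discreteness
  have key4 : ∀ v : Fin n → ℝ, v ≠ 0 → dF v = 0 →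
      ¬ DiscreteTopology {t : Fin n → ℝ // φ t p = p} := by
    intro v hv hdv hdisc
    set Lv : ℝ →L[ℝ] (Fin n → ℝ) := (ContinuousLinearMap.id ℝ ℝ).smulRight v with hLv
    set g : ℝ → M := fun t => F (t • v) with hgdef
    have hg : ∀ t : ℝ, HasMFDerivAt 𝓘(ℝ, ℝ) 𝓘(ℝ, E) g t (0 : ℝ →L[ℝ] E) := by
      intro t
      have h1 : HasMFDerivAt 𝓘(ℝ, ℝ) 𝓘(ℝ, Fin n → ℝ) (fun t : ℝ => t • v) t Lv :=
        (Lv.hasFDerivAt).hasMFDerivAt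
      have h2 := HasMFDerivAt.comp t (hFs (t • v)) h1
      have h3 : ((mfderiv 𝓘(ℝ, E) 𝓘(ℝ, E) (φ (t • v)) p).comp dF).comp Lv
          = (0 : ℝ →L[ℝ] E) := by
        refine ContinuousLinearMap.ext fun r => ?_
        have hLvr : Lv r = r • v := rfl
        simp only [ContinuousLinearMap.comp_apply, hLvr, map_smul,
          ContinuousLinearMap.zero_apply]
        show r • (mfderiv 𝓘(ℝ, E) 𝓘(ℝ, E) (φ (t • v)) p) (dF v) = 0
        have hdv' : dF v = (0 : TangentSpace 𝓘(ℝ, E) p) := hdv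
        rw [hdv', map_zero, smul_zero]
      exact h2.congr_mfderiv h3
    have hgcont : Continuous g := by
      rw [continuous_iff_continuousAt]
      exact fun t => (hg t).continuousAt
    have hg0 : g 0 = p := by
      show F ((0:ℝ) • v) = p
      rw [zero_smul, hFp]
    have hUopen : IsOpen (g ⁻¹' (chartAt E p).source) :=
      (chartAt E p).open_source.preimage hgcont
    have hU0 : (0:ℝ) ∈ g ⁻¹' (chartAt E p).source := by
      rw [Set.mem_preimage, hg0]
      exact mem_chart_source E p
    obtain ⟨ε, hε, hball⟩ := Metric.isOpen_iff.1 hUopen 0 hU0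
    have hconst : ∀ t : ℝ, |t| < ε → φ (t • v) p = p := by
      intro t ht
      have hmem : t ∈ Metric.ball (0:ℝ) ε := by
        rw [Metric.mem_ball, Real.dist_eq, sub_zero]; exact ht
      have h0mem : (0:ℝ) ∈ Metric.ball (0:ℝ) ε := Metric.mem_ball_self hε
      have hder : ∀ u ∈ Metric.ball (0:ℝ) ε,
          HasFDerivAt (fun r => extChartAt 𝓘(ℝ, E) p (g r)) (0 : ℝ →L[ℝ] E) u := by
        intro u hu
        have huU : g u ∈ (chartAt E p).source := hball hu
        have hcd := HasMFDerivAt.comp u (hasMFDerivAt_extChartAt (I := 𝓘(ℝ, E)) huU) (hg u)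
        exact (hcd.congr_mfderiv (ContinuousLinearMap.comp_zero _)).hasFDerivAt
      have heq : extChartAt 𝓘(ℝ, E) p (g t) = extChartAt 𝓘(ℝ, E) p (g 0) := by
        refine Convex.is_const_of_fderivWithin_eq_zero
          (f := fun r : ℝ => extChartAt 𝓘(ℝ, E) p (g r)) (convex_ball (0:ℝ) ε)
          (fun u hu => ((hder u hu).differentiableAt).differentiableWithinAt)
          (fun u hu => ?_) hmem h0mem
        rw [fderivWithin_of_isOpen Metric.isOpen_ball hu]
        exact (hder u hu).fderiv
      have hsrc : ∀ u ∈ Metric.ball (0:ℝ) ε, g u ∈ (extChartAt 𝓘(ℝ, E) p).source := by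
        intro u hu
        rw [extChartAt_source]
        exact hball hu
      have := (extChartAt 𝓘(ℝ, E) p).injOn (hsrc t hmem) (hsrc 0 h0mem) heq
      rw [hg0] at this
      exact this
    -- contradiction with discreteness
    have h0stab : φ (0 : Fin n → ℝ) p = p := hzero p
    have hopen : IsOpen {(⟨0, h0stab⟩ : {t : Fin n → ℝ // φ t p = p})} := isOpen_discrete _
    obtain ⟨O, hOopen, hOeq⟩ := isOpen_induced_iff.1 hopen
    have h0O : (0 : Fin n → ℝ) ∈ O := by
      have : (⟨0, h0stab⟩ : {t : Fin n → ℝ // φ t p = p}) ∈ Subtype.val ⁻¹' O := by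
        rw [hOeq]; rfl
      exact this
    obtain ⟨δ, hδ, hδball⟩ := Metric.isOpen_iff.1 hOopen 0 h0O
    have hvnorm : (0:ℝ) < ‖v‖ := norm_pos_iff.2 hv
    set r : ℝ := min (ε / 2) (δ / (‖v‖ + 1)) with hr
    have hrpos : 0 < r := lt_min (by linarith) (by positivity)
    have hrε : |r| < ε := by
      rw [abs_of_pos hrpos]
      calc r ≤ ε / 2 := min_le_left _ _
        _ < ε := by linarith
    have hstab : φ (r • v) p = p := hconst r hrε
    have hwball : r • v ∈ Metric.ball (0 : Fin n → ℝ) δ := by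
      rw [Metric.mem_ball, dist_zero_right, norm_smul, Real.norm_eq_abs, abs_of_pos hrpos]
      calc r * ‖v‖ ≤ (δ / (‖v‖ + 1)) * ‖v‖ := by
            apply mul_le_mul_of_nonneg_right (min_le_right _ _) (norm_nonneg v)
        _ < δ := by
            rw [div_mul_eq_mul_div, div_lt_iff₀ (by linarith)]
            nlinarith
    have hmem : (⟨r • v, hstab⟩ : {t : Fin n → ℝ // φ t p = p}) ∈ Subtype.val ⁻¹' O :=
      hδball hwball
    rw [hOeq] at hmem
    have : r • v = (0 : Fin n → ℝ) := by
      simpa using hmem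
    exact (smul_ne_zero (ne_of_gt hrpos) hv) this
  -- assemble
  have hcongr : LinearIndependent ℝ (fun i : Fin n =>
      (mfderiv (modelWithCornersSelf ℝ ℝ) (modelWithCornersSelf ℝ E)
        (fun s : ℝ => φ (Pi.single i s) p) 0 (1 : ℝ) : E)) ↔
      LinearIndependent ℝ (fun i : Fin n => dF (Pi.single i 1)) := by
    rw [funext hxi]
  rw [hcongr, hinj_iff]
  constructor
  · exact key3
  · intro hdisc
    by_contra hni
    simp only [injective_iff_map_eq_zero] at hni
    push_neg at hni
    obtain ⟨v, hvker, hv0⟩ := hni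
    exact key4 v hv0 hvker hdisc
end
end

section
/- Classification of continuous automorphisms of S¹ × ℝ (established in the proof of Lemma 5.4): let Λ be an automorphism of the additive topological group (ℝ/ℤ) × ℝ, i.e. a group isomorphism Λ : (ℝ/ℤ) × ℝ → (ℝ/ℤ) × ℝ that is a homeomorphism. Then there exist ε ∈ {1, −1} and real numbers a, b with b ≠ 0 such that Λ(x, y) = (ε·x + π(a·y), b·y) for all x ∈ ℝ/ℤ and y ∈ ℝ, where π : ℝ → ℝ/ℤ is the canonical projection and ε·x denotes x or −x. -/
/-!
Statement 5: classification of continuous automorphisms of S¹ × ℝ = (ℝ/ℤ) × ℝ.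
Every automorphism Λ of the topological group (ℝ/ℤ) × ℝ has the form
Λ(x, y) = (ε·x + π(a·y), b·y) with ε ∈ {1, -1}, a ∈ ℝ, b ∈ ℝ, b ≠ 0.
-/

noncomputable section

open Set Filter Topology

instance aux5FactZeroLtOne : Fact ((0:ℝ) < 1) := ⟨one_pos⟩

namespace Aux5

/-- A local section of the circle: the representative in `[-1/2, 1/2)`. -/
def sec (x : AddCircle (1:ℝ)) : ℝ := (AddCircle.equivIco 1 (-(1/2)) x : ℝ)

lemma sec_coe_of_mem {x : ℝ} (hx : x ∈ Ico (-(1/2):ℝ) (1/2)) :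
    sec (x : AddCircle (1:ℝ)) = x := by
  have hx' : x ∈ Ico (-(1/2):ℝ) (-(1/2) + 1) := ⟨hx.1, by linarith [hx.2]⟩
  have h : AddCircle.equivIco 1 (-(1/2)) (x : AddCircle (1:ℝ)) = ⟨x, hx'⟩ := by
    rw [Equiv.apply_eq_iff_eq_symm_apply]; rfl
  simp [sec, h]

lemma coe_sec (x : AddCircle (1:ℝ)) : ((sec x : ℝ) : AddCircle (1:ℝ)) = x := by
  conv_rhs => rw [← (AddCircle.equivIco 1 (-(1/2))).symm_apply_apply x]
  rfl

lemma sec_mem (x : AddCircle (1:ℝ)) : sec x ∈ Ico (-(1/2):ℝ) (1/2) := by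
  have h1 : -(1/2) ≤ sec x := (AddCircle.equivIco 1 (-(1/2)) x).2.1
  have h2 : sec x < -(1/2) + 1 := (AddCircle.equivIco 1 (-(1/2)) x).2.2
  exact ⟨h1, by linarith⟩

lemma sec_zero : sec (0 : AddCircle (1:ℝ)) = 0 := by
  have : ((0:ℝ) : AddCircle (1:ℝ)) = 0 := by norm_cast
  rw [← this, sec_coe_of_mem (by norm_num)]

lemma sec_continuousAt {x : AddCircle (1:ℝ)} (hx : x ≠ ((-(1/2):ℝ) : AddCircle (1:ℝ))) :
    ContinuousAt sec x :=
  continuous_subtype_val.continuousAt.comp (AddCircle.continuousAt_equivIco 1 (-(1/2)) hx)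

/-- Every continuous additive hom `ℝ → ℝ/ℤ` has the form `y ↦ π (a * y)`. -/
theorem exists_lin (f : ℝ →+ AddCircle (1:ℝ)) (hf : Continuous f) :
    ∃ a : ℝ, ∀ y : ℝ, f y = ((a * y : ℝ) : AddCircle (1:ℝ)) := by
  set F : ℝ → ℝ := fun y => sec (f y) with hF
  have hFcoe : ∀ y, ((F y : ℝ) : AddCircle (1:ℝ)) = f y := fun y => coe_sec (f y)
  have hF0 : F 0 = 0 := by simp [hF, map_zero f, sec_zero]
  have hFc : ∀ y, |F y| < 4⁻¹ → ContinuousAt F y := by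
    intro y hy
    have hne : f y ≠ ((-(1/2):ℝ) : AddCircle (1:ℝ)) := by
      intro h
      have : F y = -(1/2) := by
        rw [hF]; simp only; rw [h, sec_coe_of_mem (by norm_num)]
      rw [this, abs_lt] at hy
      linarith [hy.1]
    exact (sec_continuousAt hne).comp hf.continuousAt
  have hF0c : ContinuousAt F 0 := hFc 0 (by rw [hF0]; norm_num)
  obtain ⟨δ, hδ0, hδ⟩ := Metric.continuousAt_iff.mp hF0c 4⁻¹ (by norm_num)
  have hsmall : ∀ y, |y| < δ → |F y| < 4⁻¹ := by
    intro y hy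
    have := hδ (x := y) (by simpa [Real.dist_eq] using hy)
    simpa [Real.dist_eq, hF0] using this
  have hadd : ∀ y z, |y| < δ/2 → |z| < δ/2 → F (y + z) = F y + F z := by
    intro y z hy hz
    have h1 : ((F (y+z) - F y - F z : ℝ) : AddCircle (1:ℝ)) = 0 := by
      rw [AddCircle.coe_sub, AddCircle.coe_sub, hFcoe, hFcoe, hFcoe, map_add]
      abel
    obtain ⟨n, hn⟩ := (AddCircle.coe_eq_zero_iff (1:ℝ)).mp h1
    have hn' : (n:ℝ) = F (y+z) - F y - F z := by simpa using hn
    have h2 : |F (y+z)| < 4⁻¹ := hsmall _ (lt_of_le_of_lt (abs_add_le y z) (by linarith))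
    have h3 : |F y| < 4⁻¹ := hsmall _ (by linarith)
    have h4 : |F z| < 4⁻¹ := hsmall _ (by linarith)
    have h5 : |(n:ℝ)| < 1 := by
      rw [hn']
      rw [abs_lt] at h2 h3 h4 ⊢
      constructor <;> [linarith [h2.1, h3.2, h4.2]; linarith [h2.2, h3.1, h4.1]]
    have hn0 : n = 0 := by
      have h6 := abs_lt.mp h5
      have h7 : -1 < n ∧ n < 1 := by exact_mod_cast h6
      omega
    rw [hn0] at hn'; push_cast at hn'; linarith
  have hnat : ∀ (k : ℕ) (z : ℝ), 0 ≤ z → (k:ℝ) * z < δ/2 → F ((k:ℝ) * z) = k * F z := by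
    intro k
    induction k with
    | zero => intro z _ _; simpa using hF0
    | succ k ih =>
      intro z hz hk
      have hk1 : (k:ℝ) ≤ (k:ℝ) + 1 := by linarith
      have hkz : (k:ℝ) * z < δ/2 := by
        calc (k:ℝ) * z ≤ ((k:ℝ)+1) * z := mul_le_mul_of_nonneg_right hk1 hz
        _ < δ/2 := by push_cast at hk ⊢; linarith
      have hz2 : z < δ/2 := by
        calc z = 1 * z := (one_mul z).symm
        _ ≤ ((k:ℝ)+1) * z := mul_le_mul_of_nonneg_right (by linarith [Nat.cast_nonneg (α := ℝ) k]) hz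
        _ < δ/2 := by push_cast at hk; linarith
      have h1 := hadd ((k:ℝ)*z) z
        (by rw [abs_of_nonneg (mul_nonneg (Nat.cast_nonneg k) hz)]; exact hkz)
        (by rw [abs_of_nonneg hz]; exact hz2)
      have h2 := ih z hz hkz
      push_cast
      rw [show ((k:ℝ)+1) * z = (k:ℝ)*z + z by ring, h1, h2]
      ring
  set t := δ/4 with htdef
  have ht0 : 0 < t := by positivity
  have htlt : t < δ/2 := by rw [htdef]; linarith
  set a := F t / t with hadef
  have hlin : ∀ u : ℝ, 0 ≤ u → u ≤ t → F u = a * u := by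
    intro u hu hut
    set s0 := u / t with hs0def
    have hs0 : 0 ≤ s0 := div_nonneg hu ht0.le
    have hs1 : s0 ≤ 1 := (div_le_one ht0).mpr hut
    have key : ∀ n : ℕ, 1 ≤ n →
        F (((⌊s0 * (n:ℝ)⌋₊ : ℝ) / (n:ℝ)) * t) = ((⌊s0 * (n:ℝ)⌋₊ : ℝ) / (n:ℝ)) * F t := by
      intro n hn
      have hn0 : (0:ℝ) < n := by exact_mod_cast hn
      have hz : (0:ℝ) ≤ t / n := by positivity
      have hFtn : F (t/n) = F t / n := by
        have h := hnat n (t/n) hz (by rw [mul_div_cancel₀ _ hn0.ne']; exact htlt)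
        rw [mul_div_cancel₀ _ hn0.ne'] at h
        field_simp; linarith [h]
      have hm : (⌊s0 * (n:ℝ)⌋₊ : ℝ) ≤ n := by
        have h1 : (⌊s0 * (n:ℝ)⌋₊ : ℝ) ≤ s0 * n := Nat.floor_le (by positivity)
        nlinarith
      have h2 := hnat ⌊s0 * (n:ℝ)⌋₊ (t/n) hz (by
        calc (⌊s0 * (n:ℝ)⌋₊ : ℝ) * (t/n) ≤ (n:ℝ) * (t/n) := mul_le_mul_of_nonneg_right hm hz
        _ = t := by field_simp
        _ < δ/2 := htlt)
      rw [show ((⌊s0 * (n:ℝ)⌋₊ : ℝ) / (n:ℝ)) * t = (⌊s0 * (n:ℝ)⌋₊:ℝ) * (t/n) by ring, h2, hFtn]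
      ring
    have limq : Tendsto (fun n : ℕ => (⌊s0 * (n:ℝ)⌋₊ : ℝ) / (n:ℝ)) atTop (𝓝 s0) :=
      (tendsto_nat_floor_mul_div_atTop hs0).comp tendsto_natCast_atTop_atTop
    have hs0t : s0 * t = u := by rw [hs0def]; field_simp
    have hFu : ContinuousAt F u :=
      hFc u (hsmall u (by rw [abs_of_nonneg hu]; linarith))
    have lim1 : Tendsto (fun n : ℕ => ((⌊s0 * (n:ℝ)⌋₊ : ℝ) / (n:ℝ)) * t) atTop (𝓝 u) := by
      rw [← hs0t]; exact limq.mul_const t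
    have lim2 : Tendsto (fun n : ℕ => F (((⌊s0 * (n:ℝ)⌋₊ : ℝ) / (n:ℝ)) * t)) atTop (𝓝 (F u)) :=
      (hFu.tendsto).comp lim1
    have lim3 : Tendsto (fun n : ℕ => ((⌊s0 * (n:ℝ)⌋₊ : ℝ) / (n:ℝ)) * F t) atTop (𝓝 (s0 * F t)) :=
      limq.mul_const _
    have lim2' : Tendsto (fun n : ℕ => ((⌊s0 * (n:ℝ)⌋₊ : ℝ) / (n:ℝ)) * F t) atTop (𝓝 (F u)) :=
      Filter.Tendsto.congr' (eventually_atTop.2 ⟨1, fun n hn => key n hn⟩) lim2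
    have heq : F u = s0 * F t := tendsto_nhds_unique lim2' lim3
    rw [heq, hadef, hs0def]
    field_simp
  have hodd : ∀ u : ℝ, 0 ≤ u → u ≤ t → F (-u) = - F u := by
    intro u hu hut
    have h := hadd u (-u) (by rw [abs_of_nonneg hu]; linarith)
      (by rw [abs_neg, abs_of_nonneg hu]; linarith)
    rw [add_neg_cancel, hF0] at h
    linarith
  have hsmallF : ∀ z : ℝ, |z| ≤ t → F z = a * z := by
    intro z hz
    rcases le_or_gt 0 z with h | h
    · exact hlin z h (by rwa [abs_of_nonneg h] at hz)
    · have hz' : |(-z)| ≤ t := by rwa [abs_neg]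
      have h1 : F (-z) = a * (-z) := hlin (-z) (by linarith)
        (by rwa [abs_of_nonneg (by linarith : (0:ℝ) ≤ -z)] at hz')
      have h2 := hodd (-z) (by linarith)
        (by rwa [abs_of_nonneg (by linarith : (0:ℝ) ≤ -z)] at hz')
      rw [neg_neg] at h2
      rw [h2, h1]; ring
  refine ⟨a, fun y => ?_⟩
  obtain ⟨n, hn⟩ := exists_nat_gt (|y| / t)
  have hn1 : (0:ℝ) < (n:ℝ) + 1 := by positivity
  have hzy : |y / ((n:ℝ)+1)| ≤ t := by
    rw [abs_div, abs_of_pos hn1, div_le_iff₀ hn1]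
    have h1 : |y| / t < n := hn
    have h2 : |y| < n * t := by rwa [div_lt_iff₀ ht0] at h1
    nlinarith
  have hFz := hsmallF (y / ((n:ℝ)+1)) hzy
  have hy' : y = (n+1) • (y / ((n:ℝ)+1)) := by
    rw [nsmul_eq_mul]; push_cast; field_simp
  calc f y = f ((n+1) • (y / ((n:ℝ)+1))) := by rw [← hy']
    _ = (n+1) • f (y / ((n:ℝ)+1)) := map_nsmul f _ _
    _ = (n+1) • ((F (y / ((n:ℝ)+1)) : ℝ) : AddCircle (1:ℝ)) := by rw [hFcoe]
    _ = ((((n:ℝ)+1) * F (y / ((n:ℝ)+1)) : ℝ) : AddCircle (1:ℝ)) := by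
        rw [← AddCircle.coe_nsmul]
        congr 1
        rw [nsmul_eq_mul]
        push_cast
        try ring
    _ = ((a * y : ℝ) : AddCircle (1:ℝ)) := by
        rw [hFz]
        congr 1
        field_simp
  
/-- Continuous automorphisms of the circle are `± id`. -/
theorem circle_aut (φ ψ : AddCircle (1:ℝ) →+ AddCircle (1:ℝ))
    (hφ : Continuous φ) (hψ : Continuous ψ) (h : ∀ x, ψ (φ x) = x) :
    ∃ ε : ℤ, (ε = 1 ∨ ε = -1) ∧ ∀ x, φ x = ε • x := by
  have coeint : ∀ (c : ℝ), ((c : ℝ) : AddCircle (1:ℝ)) = 0 ↔ ∃ n : ℤ, (n:ℝ) = c := by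
    intro c
    rw [AddCircle.coe_eq_zero_iff (1:ℝ)]
    constructor
    · rintro ⟨n, hn⟩; exact ⟨n, by simpa using hn⟩
    · rintro ⟨n, hn⟩; exact ⟨n, by simpa using hn⟩
  have getint : ∀ (χ : AddCircle (1:ℝ) →+ AddCircle (1:ℝ)), Continuous χ →
      ∃ n : ℤ, ∀ y : ℝ, χ ((y : ℝ) : AddCircle (1:ℝ)) = (((n:ℝ) * y : ℝ) : AddCircle (1:ℝ)) := by
    intro χ hχ
    obtain ⟨c, hc⟩ := exists_lin
      (χ.comp ((QuotientAddGroup.mk' (AddSubgroup.zmultiples (1:ℝ)))))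
      (hχ.comp continuous_quotient_mk')
    have h1 : ((c * 1 : ℝ) : AddCircle (1:ℝ)) = 0 := by
      rw [← hc 1]
      have : ((1:ℝ) : AddCircle (1:ℝ)) = 0 := AddCircle.coe_period (p := (1:ℝ))
      simp only [QuotientAddGroup.mk'_apply, AddMonoidHom.coe_comp, Function.comp_apply]
      rw [show ((QuotientAddGroup.mk (1:ℝ)) : AddCircle (1:ℝ)) = 0 from this, map_zero]
    rw [mul_one] at h1
    obtain ⟨n, hn⟩ := (coeint c).mp h1
    exact ⟨n, fun y => by rw [hn]; exact hc y⟩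
  obtain ⟨n, hnφ⟩ := getint φ hφ
  obtain ⟨m, hmψ⟩ := getint ψ hψ
  have hcomp : ∀ y : ℝ, ((((m*n : ℤ):ℝ) * y : ℝ) : AddCircle (1:ℝ)) = ((y:ℝ) : AddCircle (1:ℝ)) := by
    intro y
    have := h ((y:ℝ) : AddCircle (1:ℝ))
    rw [hnφ y, hmψ ((n:ℝ) * y)] at this
    rw [← this]
    push_cast
    ring_nf
  have hmn : m * n = 1 := by
    by_contra hne
    set k : ℤ := m * n - 1 with hk
    have hk0 : k ≠ 0 := by omega
    have hk0' : (k:ℝ) ≠ 0 := Int.cast_ne_zero.mpr hk0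
    have h1 := hcomp ((1:ℝ) / (2 * k))
    have h2 : ((((m*n : ℤ):ℝ) * ((1:ℝ)/(2*k)) - (1:ℝ)/(2*k) : ℝ) : AddCircle (1:ℝ)) = 0 := by
      rw [AddCircle.coe_sub, h1, sub_self]
    have h3 : ((m*n : ℤ):ℝ) * ((1:ℝ)/(2*k)) - (1:ℝ)/(2*k) = 1/2 := by
      have : ((m*n:ℤ):ℝ) = (k:ℝ) + 1 := by rw [hk]; push_cast; ring
      rw [this]
      field_simp
      ring
    rw [h3] at h2
    obtain ⟨j, hj⟩ := (coeint _).mp h2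
    have : (2*j : ℤ) = 1 := by
      have h4 : ((2*j : ℤ):ℝ) = 1 := by push_cast; linarith
      exact_mod_cast h4
    omega
  have hn1 : n = 1 ∨ n = -1 := by
    have : IsUnit n := IsUnit.of_mul_eq_one m (by rw [mul_comm]; exact hmn)
    exact Int.isUnit_iff.mp this
  refine ⟨n, hn1, fun x => ?_⟩
  induction x using QuotientAddGroup.induction_on with
  | H y =>
    have := hnφ y
    rw [show ((QuotientAddGroup.mk y) : AddCircle (1:ℝ)) = ((y:ℝ) : AddCircle (1:ℝ)) from rfl]
    rw [this, ← zsmul_eq_mul, AddCircle.coe_zsmul]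

/-- The second component of the image of the circle is 0. -/
theorem snd_eq_zero (Λ : (AddCircle (1 : ℝ) × ℝ) ≃+ (AddCircle (1 : ℝ) × ℝ))
    (hΛ : Continuous Λ) : ∀ x : AddCircle (1:ℝ), (Λ (x, 0)).2 = 0 := by
  set ψ : AddCircle (1:ℝ) →+ ℝ :=
    (AddMonoidHom.snd _ _).comp (Λ.toAddMonoidHom.comp (AddMonoidHom.inl _ _)) with hψdef
  have hψ : ∀ x, ψ x = (Λ (x, 0)).2 := fun x => rfl
  have hψc : Continuous ψ := by
    have : Continuous fun x : AddCircle (1:ℝ) => (Λ (x, 0)).2 :=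
      continuous_snd.comp (hΛ.comp (continuous_id.prodMk continuous_const))
    exact this
  have hcomp : Continuous fun x => |ψ x| := continuous_abs.comp hψc
  obtain ⟨x₀, hx₀⟩ := hcomp.exists_forall_ge' 0 (by
    rw [Filter.cocompact_eq_bot]; exact Filter.eventually_bot)
  intro x
  by_contra hx
  rw [← hψ x] at hx
  have habs : 0 < |ψ x| := abs_pos.mpr hx
  obtain ⟨n, hn⟩ := exists_nat_gt (|ψ x₀| / |ψ x|)
  have key : (n:ℝ) * |ψ x| ≤ |ψ x₀| := by
    have h1 : ψ (n • x) = n • ψ x := map_nsmul ψ n x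
    have h2 : |ψ (n • x)| ≤ |ψ x₀| := hx₀ _
    rw [h1, nsmul_eq_mul, abs_mul, Nat.abs_cast] at h2
    exact h2
  rw [div_lt_iff₀ habs] at hn
  linarith

end Aux5

theorem continuous_automorphism_of_circle_prod_real
    (Λ : (AddCircle (1 : ℝ) × ℝ) ≃+ (AddCircle (1 : ℝ) × ℝ))
    (hΛ : Continuous Λ) (hΛsymm : Continuous Λ.symm) :
    ∃ ε : ℤ, (ε = 1 ∨ ε = -1) ∧
      ∃ a b : ℝ, b ≠ 0 ∧
        ∀ (x : AddCircle (1 : ℝ)) (y : ℝ),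
          Λ (x, y) = (ε • x + ((a * y : ℝ) : AddCircle (1 : ℝ)), b * y) := by
  have h2 := Aux5.snd_eq_zero Λ hΛ
  have h2' := Aux5.snd_eq_zero Λ.symm hΛsymm
  set φ : AddCircle (1:ℝ) →+ AddCircle (1:ℝ) :=
    (AddMonoidHom.fst _ _).comp (Λ.toAddMonoidHom.comp (AddMonoidHom.inl _ _)) with hφdef
  set ψ : AddCircle (1:ℝ) →+ AddCircle (1:ℝ) :=
    (AddMonoidHom.fst _ _).comp (Λ.symm.toAddMonoidHom.comp (AddMonoidHom.inl _ _)) with hψdef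
  have hφ : ∀ x, φ x = (Λ (x, 0)).1 := fun x => rfl
  have hψ : ∀ x, ψ x = (Λ.symm (x, 0)).1 := fun x => rfl
  have hφc : Continuous φ := by
    have : Continuous fun x : AddCircle (1:ℝ) => (Λ (x, 0)).1 :=
      continuous_fst.comp (hΛ.comp (continuous_id.prodMk continuous_const))
    exact this
  have hψc : Continuous ψ := by
    have : Continuous fun x : AddCircle (1:ℝ) => (Λ.symm (x, 0)).1 :=
      continuous_fst.comp (hΛsymm.comp (continuous_id.prodMk continuous_const))
    exact this
  have hinv : ∀ x, ψ (φ x) = x := by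
    intro x
    have hΛx : Λ (x, 0) = (φ x, 0) := Prod.ext (hφ x).symm (h2 x)
    rw [hψ, ← hΛx, Λ.symm_apply_apply]
  obtain ⟨ε, hε, hφeq⟩ := Aux5.circle_aut φ ψ hφc hψc hinv
  set fh : ℝ →+ AddCircle (1:ℝ) :=
    (AddMonoidHom.fst _ _).comp (Λ.toAddMonoidHom.comp (AddMonoidHom.inr _ _)) with hfhdef
  set g : ℝ →+ ℝ :=
    (AddMonoidHom.snd _ _).comp (Λ.toAddMonoidHom.comp (AddMonoidHom.inr _ _)) with hgdef
  have hfh : ∀ y, fh y = (Λ (0, y)).1 := fun y => rfl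
  have hgy : ∀ y, g y = (Λ (0, y)).2 := fun y => rfl
  have hfhc : Continuous fh := by
    have : Continuous fun y : ℝ => (Λ (0, y)).1 :=
      continuous_fst.comp (hΛ.comp (continuous_const.prodMk continuous_id))
    exact this
  have hgc : Continuous g := by
    have : Continuous fun y : ℝ => (Λ (0, y)).2 :=
      continuous_snd.comp (hΛ.comp (continuous_const.prodMk continuous_id))
    exact this
  obtain ⟨a, ha⟩ := Aux5.exists_lin fh hfhc
  have hg : ∀ y, g y = g 1 * y := by
    intro y
    have h := map_real_smul g hgc y 1
    rw [smul_eq_mul, mul_one, smul_eq_mul] at h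
    rw [h, mul_comm]
  have hsplit : ∀ (x : AddCircle (1:ℝ)) (y : ℝ), Λ (x, y) = Λ (x, 0) + Λ (0, y) := by
    intro x y
    rw [← map_add]
    congr 1
    simp [Prod.mk_add_mk]
  have hb : g 1 ≠ 0 := by
    intro hb0
    obtain ⟨z, hz⟩ := Λ.surjective (0, 1)
    have h1 : (Λ z).2 = 0 := by
      have : z = (z.1, z.2) := rfl
      rw [this, hsplit z.1 z.2]
      have e1 : (Λ (z.1, 0)).2 = 0 := h2 z.1
      have e2 : (Λ ((0:AddCircle (1:ℝ)), z.2)).2 = 0 := by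
        rw [← hgy, hg, hb0, zero_mul]
      simp [Prod.snd_add, e1, e2]
    rw [hz] at h1
    norm_num at h1
  refine ⟨ε, hε, a, g 1, hb, ?_⟩
  intro x y
  rw [hsplit x y]
  have e1 : Λ (x, 0) = (ε • x, 0) := Prod.ext (by rw [← hφ x]; exact hφeq x) (h2 x)
  have e2 : Λ ((0:AddCircle (1:ℝ)), y) = (((a * y : ℝ) : AddCircle (1:ℝ)), g 1 * y) :=
    Prod.ext (by rw [← hfh y]; exact ha y) (by rw [← hgy y]; exact hg y)
  rw [e1, e2, Prod.mk_add_mk, zero_add]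
end
end

section
/- Lemma 5.4 (flat version): let U₁, U₂ ⊆ ℂ² be open with U₁ connected. For i = 1, 2 let J_i, H_i : U_i → ℝ be C^∞ and suppose φ_i : ((ℝ/ℤ) × ℝ) × U_i → U_i is a C^∞ action of the additive group (ℝ/ℤ) × ℝ on U_i such that for every p ∈ U_i, (d/dt)|_{t=0} φ_i((π(t), 0), p) = X_{J_i}(p) and (d/ds)|_{s=0} φ_i((0, s), p) = X_{H_i}(p) (the action is the Hamiltonian flow action of (J_i, H_i)). Suppose ρ : U₁ → ℂ² is a C^∞ injective map with ρ(U₁) ⊆ U₂ satisfying ω(Dρ(z)u, Dρ(z)v) = ω(u,v) for all z, u, v, and suppose there is an automorphism Λ of the topological group (ℝ/ℤ) × ℝ (a group isomorphism and homeomorphism) with ρ(φ₁(g, p)) = φ₂(Λ(g), ρ(p)) for all g and p. Then there exist e ∈ {1, −1} and real numbers a, b, c_J, c_H with b ≠ 0 such that J₂∘ρ = e·J₁ + c_J and H₂∘ρ = a·J₁ + b·H₁ + c_H on U₁. -/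
/-!
Statement 7 (Lemma 5.4, flat version): if ρ : U₁ → U₂ ⊆ ℂ² is a symplectic
(S¹ × ℝ)-embedding with respect to the Hamiltonian flow actions of (J₁, H₁) and
(J₂, H₂), then J₂∘ρ = e·J₁ + c_J and H₂∘ρ = a·J₁ + b·H₁ + c_H with e ∈ {1,−1}, b ≠ 0.
The Hamiltonian vector field X_f of f is characterized by ω(X_f(z), v) = −Df(z)v.
-/

noncomputable section

lemma symplForm_smul_left {N : ℕ} (a : ℝ) (u v : EuclideanSpace ℂ (Fin N)) :
    symplForm (a • u) v = a * symplForm u v := by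
  unfold symplForm
  rw [RCLike.real_smul_eq_coe_smul (K := ℂ), inner_smul_left]
  simp

lemma symplForm_add_left {N : ℕ} (u u' v : EuclideanSpace ℂ (Fin N)) :
    symplForm (u + u') v = symplForm u v + symplForm u' v := by
  unfold symplForm
  rw [inner_add_left]
  simp

lemma hasDerivAt_combo {E : Type*} [NormedAddCommGroup E] [NormedSpace ℝ E]
    {F : ℝ × ℝ → E} (hF : DifferentiableAt ℝ F (0, 0)) {X Y : E} (a b : ℝ)
    (hX : HasDerivAt (fun t => F (t, 0)) X 0) (hY : HasDerivAt (fun s => F (0, s)) Y 0) :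
    HasDerivAt (fun s => F (a * s, b * s)) (a • X + b • Y) 0 := by
  set L := fderiv ℝ F (0, 0) with hL
  have hFL : HasFDerivAt F L (0, 0) := hF.hasFDerivAt
  have hinl : HasDerivAt (fun t : ℝ => ((t, (0:ℝ)) : ℝ × ℝ)) ((1:ℝ), (0:ℝ)) 0 :=
    (ContinuousLinearMap.inl ℝ ℝ ℝ).hasDerivAt
  have hinr : HasDerivAt (fun s : ℝ => (((0:ℝ), s) : ℝ × ℝ)) ((0:ℝ), (1:ℝ)) 0 :=
    (ContinuousLinearMap.inr ℝ ℝ ℝ).hasDerivAt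
  have hX' := HasFDerivAt.comp_hasDerivAt (f := fun t : ℝ => ((t, (0:ℝ)) : ℝ × ℝ)) 0 hFL hinl
  have hY' := HasFDerivAt.comp_hasDerivAt (f := fun s : ℝ => (((0:ℝ), s) : ℝ × ℝ)) 0 hFL hinr
  have hXL : L (1, 0) = X := hX'.unique hX
  have hYL : L (0, 1) = Y := hY'.unique hY
  have hl : HasDerivAt (fun s : ℝ => s • ((a, b) : ℝ × ℝ)) ((1:ℝ) • ((a, b) : ℝ × ℝ)) 0 :=
    (hasDerivAt_id (0:ℝ)).smul_const ((a, b) : ℝ × ℝ)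
  rw [one_smul] at hl
  have hFL' : HasFDerivAt F L ((0:ℝ) • ((a, b) : ℝ × ℝ)) := by
    rw [zero_smul]; exact hFL
  have hcomp : HasDerivAt (fun s : ℝ => F (s • ((a, b) : ℝ × ℝ))) (L (a, b)) 0 :=
    HasFDerivAt.comp_hasDerivAt (f := fun s : ℝ => s • ((a, b) : ℝ × ℝ)) 0 hFL' hl
  have hfun : (fun s : ℝ => F (s • ((a, b) : ℝ × ℝ))) = fun s => F (a * s, b * s) := by
    funext s
    rw [Prod.smul_mk, smul_eq_mul, smul_eq_mul, mul_comm s a, mul_comm s b]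
  have hval : L (a, b) = a • X + b • Y := by
    have h1 : ((a, b) : ℝ × ℝ) = a • ((1:ℝ), (0:ℝ)) + b • ((0:ℝ), (1:ℝ)) := by
      simp [Prod.smul_mk]
    rw [h1, map_add, map_smul, map_smul, hXL, hYL]
  rw [← hfun, ← hval]
  exact hcomp

lemma const_on_preconnected {E : Type*} [NormedAddCommGroup E] [NormedSpace ℝ E] {U : Set E}
    (hU : IsOpen U) (hconn : IsPreconnected U) {f : E → ℝ}
    (hd : ∀ p ∈ U, DifferentiableAt ℝ f p) (hz : ∀ p ∈ U, fderiv ℝ f p = 0)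
    {x y : E} (hx : x ∈ U) (hy : y ∈ U) : f x = f y := by
  have hloc : ∀ p ∈ U, ∃ ε > 0, Metric.ball p ε ⊆ U ∧ ∀ q ∈ Metric.ball p ε, f q = f p := by
    intro p hp
    obtain ⟨ε, hε, hball⟩ := Metric.isOpen_iff.mp hU p hp
    refine ⟨ε, hε, hball, fun q hq => ?_⟩
    refine (convex_ball p ε).is_const_of_fderivWithin_eq_zero (𝕜 := ℝ) (f := f)
      (fun z hz' => (hd z (hball hz')).differentiableWithinAt) (fun z hz' => ?_) hq
      (Metric.mem_ball_self hε)
    rw [fderivWithin_of_isOpen Metric.isOpen_ball hz']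
    exact hz z (hball hz')
  set V := {p | p ∈ U ∧ f p = f x} with hV
  set W := {p | p ∈ U ∧ f p ≠ f x} with hW
  have hVopen : IsOpen V := by
    rw [Metric.isOpen_iff]
    rintro p ⟨hpU, hpf⟩
    obtain ⟨ε, hε, hball, hconst⟩ := hloc p hpU
    exact ⟨ε, hε, fun q hq => ⟨hball hq, (hconst q hq).trans hpf⟩⟩
  have hWopen : IsOpen W := by
    rw [Metric.isOpen_iff]
    rintro p ⟨hpU, hpf⟩
    obtain ⟨ε, hε, hball, hconst⟩ := hloc p hpU
    exact ⟨ε, hε, fun q hq => ⟨hball hq, by rw [hconst q hq]; exact hpf⟩⟩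
  by_contra hne
  have hsub : U ⊆ V ∪ W := by
    intro p hp
    by_cases h : f p = f x
    · exact Or.inl ⟨hp, h⟩
    · exact Or.inr ⟨hp, h⟩
  obtain ⟨z, hzU, hzV, hzW⟩ :=
    hconn V W hVopen hWopen hsub ⟨x, hx, hx, rfl⟩ ⟨y, hy, hy, fun h => hne h.symm⟩
  exact hzW.2 hzV.2

lemma real_addHom_eq (f : ℝ →+ ℝ) (hf : Continuous f) (s : ℝ) : f s = f 1 * s := by
  have h := (f.toRealLinearMap hf).map_smul s (1:ℝ)
  simp only [smul_eq_mul, mul_one] at h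
  have h1 : ∀ x, f.toRealLinearMap hf x = f x := fun x =>
    congrFun (AddMonoidHom.coe_toRealLinearMap f hf) x
  rw [h1, h1] at h
  rw [h, mul_comm]

lemma addCircle_coe_inj {x y : ℝ} (h : (x : AddCircle (1:ℝ)) = (y : AddCircle (1:ℝ)))
    (hxy : |x - y| < 1) : x = y := by
  have h0 : ((x - y : ℝ) : AddCircle (1:ℝ)) = 0 := by
    rw [AddCircle.coe_sub, h, sub_self]
  obtain ⟨n, hn⟩ := (AddCircle.coe_eq_zero_iff (1:ℝ)).mp h0
  have hn' : (n : ℝ) = x - y := by simpa using hn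
  have : |(n : ℝ)| < 1 := hn' ▸ hxy
  have : |n| < 1 := by exact_mod_cast this
  have : n = 0 := Int.abs_lt_one_iff.mp this

  have : x - y = 0 := by rw [← hn', this]; simp
  linarith [this]

lemma circle_hom_lift (c : ℝ →+ AddCircle (1:ℝ)) (hc : Continuous c) :
    ∃ a : ℝ, ∀ s : ℝ, c s = ↑(a * s) := by
  haveI : Fact ((0:ℝ) < 1) := ⟨one_pos⟩
  obtain ⟨δ, hδpos, hδ⟩ : ∃ δ > 0, ∀ s : ℝ, |s| ≤ δ → ‖c s‖ < 8⁻¹ := by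
    have h0 : ContinuousAt c 0 := hc.continuousAt
    rw [Metric.continuousAt_iff] at h0
    obtain ⟨ε, hεpos, h⟩ := h0 8⁻¹ (by norm_num)
    refine ⟨ε/2, by positivity, fun s hs => ?_⟩
    have hd : dist s 0 < ε := by rw [Real.dist_eq, sub_zero]; linarith
    have := h hd
    rwa [map_zero, dist_zero_right] at this
  set g : ℝ → ℝ := fun s => ((AddCircle.equivIco 1 (-(2⁻¹):ℝ) (c s) : Set.Ico _ _) : ℝ) with hgdef
  have hg_coe : ∀ s, ((g s : ℝ) : AddCircle (1:ℝ)) = c s := fun s =>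
    (AddCircle.equivIco 1 (-(2⁻¹):ℝ)).symm_apply_apply (c s)
  have hg_mem : ∀ s, g s ∈ Set.Ico (-(2⁻¹):ℝ) (-(2⁻¹)+1) := fun s =>
    (AddCircle.equivIco 1 (-(2⁻¹):ℝ) (c s)).2
  have hg_half : ∀ s, |g s| ≤ 2⁻¹ := by
    intro s
    have := hg_mem s
    rw [abs_le]
    constructor <;> [linarith [this.1]; linarith [this.2.le]]
  have hg_norm : ∀ s, ‖c s‖ = |g s| := by
    intro s
    rw [← hg_coe s]
    rw [AddCircle.norm_coe_eq_abs_iff 1 one_ne_zero]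
    simpa using hg_half s
  have habs : ∀ s, |s| ≤ δ → |g s| < 8⁻¹ := by
    intro s hs
    rw [← hg_norm]; exact hδ s hs
  have hadd : ∀ s t, |s| ≤ δ → |t| ≤ δ → |s + t| ≤ δ → g (s + t) = g s + g t := by
    intro s t hs ht hst
    apply addCircle_coe_inj
    · rw [hg_coe, AddCircle.coe_add, hg_coe, hg_coe, map_add]
    · have h1 := habs s hs; have h2 := habs t ht; have h3 := habs _ hst
      have := abs_sub (g (s+t)) (g s + g t)
      have habs2 : |g s + g t| ≤ |g s| + |g t| := abs_add_le _ _
      calc |g (s+t) - (g s + g t)| ≤ |g (s+t)| + |g s + g t| := abs_sub _ _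
        _ < 1 := by linarith
  have hzero : g 0 = 0 := by
    apply addCircle_coe_inj
    · rw [hg_coe, map_zero]; norm_num
    · rw [sub_zero]; exact lt_trans (habs 0 (by simp [le_of_lt hδpos])) (by norm_num)
  have hneg : ∀ s, |s| ≤ δ → g (-s) = -(g s) := by
    intro s hs
    have := hadd s (-s) hs (by rwa [abs_neg]) (by simp [le_of_lt hδpos])
    rw [add_neg_cancel, hzero] at this
    linarith
  have hnat : ∀ n : ℕ, ∀ s : ℝ, |s| ≤ δ → |(n:ℝ) * s| ≤ δ → g ((n:ℝ) * s) = n * g s := by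
    intro n
    induction n with
    | zero => intro s _ _; simpa using hzero
    | succ n ih =>
      intro s hs hns
      have hmono : |(n:ℝ) * s| ≤ |((n:ℝ)+1) * s| := by
        rw [abs_mul, abs_mul]
        have : |(n:ℝ)| ≤ |(n:ℝ)+1| := by
          rw [abs_of_nonneg (by positivity), abs_of_nonneg (by positivity)]; linarith
        exact mul_le_mul_of_nonneg_right this (abs_nonneg s)
      push_cast at hns ⊢
      have hns' : |(n:ℝ) * s| ≤ δ := le_trans hmono hns
      rw [show ((n:ℝ)+1) * s = (n:ℝ) * s + s by ring, hadd _ _ hns' hs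
        (by rw [show (n:ℝ) * s + s = ((n:ℝ)+1)*s by ring]; exact hns), ih s hs hns']
      ring
  -- identity for rational multiples of δ
  have hrat : ∀ q : ℚ, |(q:ℝ)| ≤ 1 → g ((q:ℝ) * δ) = (q:ℝ) * g δ := by
    intro q hq
    have hden : (0:ℝ) < (q.den : ℝ) := by exact_mod_cast q.pos
    have hden1 : (1:ℝ) ≤ (q.den : ℝ) := by exact_mod_cast q.pos
    have hqcast : (q : ℝ) = (q.num : ℝ) / (q.den : ℝ) := by
      rw [Rat.cast_def]
    have hnumden : |(q.num : ℝ)| ≤ (q.den : ℝ) := by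
      rw [hqcast] at hq
      rw [abs_div, abs_of_pos hden, div_le_one hden] at hq
      exact hq
    -- g (δ / den) = g δ / den
    have hδn : |δ / (q.den : ℝ)| ≤ δ := by
      rw [abs_of_pos (by positivity)]
      rw [div_le_iff₀ hden]
      nlinarith [hδpos, hden1]
    have h1 : g ((q.den : ℝ) * (δ / (q.den:ℝ))) = (q.den : ℝ) * g (δ / (q.den:ℝ)) := by
      apply hnat _ _ hδn
      rw [mul_div_cancel₀ _ (ne_of_gt hden), abs_of_pos hδpos]
    rw [mul_div_cancel₀ _ (ne_of_gt hden)] at h1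
    -- g (|num| * (δ/den)) = |num| * g (δ/den)
    have hnatabs : (q.num.natAbs : ℝ) = |(q.num:ℝ)| := by
      simp [Nat.cast_natAbs]
    have h2 : g ((q.num.natAbs : ℝ) * (δ / (q.den:ℝ))) = (q.num.natAbs : ℝ) * g (δ / (q.den:ℝ)) := by
      apply hnat _ _ hδn
      rw [abs_mul, abs_of_nonneg (by positivity : (0:ℝ) ≤ (q.num.natAbs:ℝ)),
        abs_of_pos (by positivity : (0:ℝ) < δ / (q.den:ℝ)), hnatabs]
      calc |(q.num:ℝ)| * (δ / (q.den:ℝ)) ≤ (q.den:ℝ) * (δ / (q.den:ℝ)) := by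
            apply mul_le_mul_of_nonneg_right hnumden (by positivity)
        _ = δ := by field_simp
    have hql : (q:ℝ) * δ = (q.num:ℝ) * (δ / (q.den:ℝ)) := by rw [hqcast]; ring
    have hdenne : ((q.den:ℝ)) ≠ 0 := ne_of_gt hden
    rcases le_or_gt 0 q.num with hpos | hneg2
    · have heq : (q.num.natAbs : ℝ) = (q.num : ℝ) := by
        rw [hnatabs, abs_of_nonneg (by exact_mod_cast hpos)]
      rw [heq] at h2
      rw [hql, h2, hqcast, h1]
      field_simp
    · have heq : (q.num.natAbs : ℝ) = -(q.num : ℝ) := by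
        rw [hnatabs, abs_of_neg (by exact_mod_cast hneg2)]
      rw [heq] at h2
      have hx : |(-(q.num:ℝ)) * (δ / (q.den:ℝ))| ≤ δ := by
        rw [abs_mul, abs_neg, abs_of_pos (by positivity : (0:ℝ) < δ / (q.den:ℝ))]
        calc |(q.num:ℝ)| * (δ / (q.den:ℝ)) ≤ (q.den:ℝ) * (δ / (q.den:ℝ)) :=
              mul_le_mul_of_nonneg_right hnumden (by positivity)
          _ = δ := by field_simp
      have h3 := hneg (-(q.num:ℝ) * (δ / (q.den:ℝ))) hx
      rw [show -(-(q.num:ℝ) * (δ / (q.den:ℝ))) = (q.num:ℝ) * (δ / (q.den:ℝ)) by ring] at h3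
      rw [hql, h3, h2, hqcast, h1]
      field_simp
  -- continuity of g near points with small norm
  have hgcont : ∀ s, |s| ≤ δ → ContinuousAt g s := by
    intro s hs
    have hne : c s ≠ ((-(2⁻¹) : ℝ) : AddCircle (1:ℝ)) := by
      intro h
      have hnn : ‖((-(2⁻¹):ℝ) : AddCircle (1:ℝ))‖ = |(-(2⁻¹):ℝ)| :=
        (AddCircle.norm_coe_eq_abs_iff 1 one_ne_zero).mpr
          (by rw [abs_neg, abs_one, abs_of_pos (by norm_num : (0:ℝ) < 2⁻¹)]; norm_num)
      have h1 : ‖c s‖ = 2⁻¹ := by rw [h, hnn]; norm_num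
      have := hδ s hs
      rw [h1] at this
      norm_num at this
    exact continuous_subtype_val.continuousAt.comp
      ((AddCircle.continuousAt_equivIco 1 (-(2⁻¹):ℝ) hne).comp hc.continuousAt)
  -- linear on [-δ, δ]
  have hlin : ∀ s : ℝ, |s| ≤ δ → g s = g δ / δ * s := by
    intro s hs
    set r : ℝ := s / δ with hr
    have hrabs : |r| ≤ 1 := by
      rw [hr, abs_div, abs_of_pos hδpos, div_le_one hδpos]
      exact hs
    have hqseq : ∀ k : ℕ, ∃ q : ℚ, |(q:ℝ)| ≤ 1 ∧ |r - (q:ℝ)| < 1/((k:ℝ)+1) := by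
      intro k
      obtain ⟨q, hq⟩ := exists_rat_near r (by positivity : (0:ℝ) < 1/((k:ℝ)+1))
      refine ⟨max (-1) (min 1 q), ?_, ?_⟩
      · push_cast
        rcases le_total ((q:ℝ)) (-1) with h | h
        · rw [min_eq_right (by linarith), max_eq_left (by linarith)]
          norm_num
        · rcases le_total (1:ℝ) (q:ℝ) with h' | h'
          · rw [min_eq_left h', max_eq_right (by norm_num : (-1:ℝ) ≤ 1)]; norm_num
          · rw [min_eq_right h', max_eq_right h]
            rw [abs_le]; exact ⟨h, h'⟩
      · push_cast
        have hr1 := (abs_le.mp hrabs).1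
        have hr2 := (abs_le.mp hrabs).2
        rcases le_total ((q:ℝ)) (-1) with h | h
        · rw [min_eq_right (by linarith), max_eq_left (by linarith)]
          rw [abs_lt] at hq ⊢
          constructor <;> linarith [hq.1, hq.2]
        · rcases le_total (1:ℝ) (q:ℝ) with h' | h'
          · rw [min_eq_left h', max_eq_right (by norm_num : (-1:ℝ) ≤ 1)]
            rw [abs_lt] at hq ⊢
            constructor <;> linarith [hq.1, hq.2]
          · rw [min_eq_right h', max_eq_right h]
            exact hq
    choose q hq1 hq2 using hqseq
    have htend : Filter.Tendsto (fun k : ℕ => ((q k : ℝ))) Filter.atTop (nhds r) := by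
      rw [tendsto_iff_dist_tendsto_zero]
      apply squeeze_zero (fun k => dist_nonneg) (fun k => ?_) tendsto_one_div_add_atTop_nhds_zero_nat
      rw [Real.dist_eq, abs_sub_comm]
      exact le_of_lt (hq2 k)
    have htends : Filter.Tendsto (fun k : ℕ => ((q k : ℝ)) * δ) Filter.atTop (nhds s) := by
      have : r * δ = s := by rw [hr]; field_simp
      simpa [this] using htend.mul_const δ
    have h1 : Filter.Tendsto (fun k : ℕ => g ((q k : ℝ) * δ)) Filter.atTop (nhds (g s)) :=
      (hgcont s hs).tendsto.comp htends
    have h2 : (fun k : ℕ => g ((q k : ℝ) * δ)) = fun k : ℕ => (q k : ℝ) * g δ := by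
      funext k; exact hrat (q k) (hq1 k)
    rw [h2] at h1
    have h3 : Filter.Tendsto (fun k : ℕ => (q k : ℝ) * g δ) Filter.atTop (nhds (r * g δ)) :=
      htend.mul_const _
    have := tendsto_nhds_unique h1 h3
    rw [this, hr]; ring
  refine ⟨g δ / δ, fun s => ?_⟩
  obtain ⟨n, hn⟩ := exists_nat_gt (|s| / δ)
  have hnpos : 0 < n := by
    rcases Nat.eq_zero_or_pos n with h | h
    · subst h
      simp only [Nat.cast_zero] at hn
      exact absurd hn (not_lt.mpr (by positivity))
    · exact h
  have hsn : |s / (n:ℝ)| ≤ δ := by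
    have hn' : (0:ℝ) < n := by exact_mod_cast hnpos
    rw [abs_div, abs_of_pos hn', div_le_iff₀ hn']
    rw [div_lt_iff₀ hδpos] at hn
    nlinarith
  have : c s = n • c (s / (n:ℝ)) := by
    rw [← map_nsmul]
    congr 1
    have hn' : ((n:ℝ)) ≠ 0 := by positivity
    rw [nsmul_eq_mul]; field_simp
  rw [this, ← hg_coe (s / (n:ℝ)), hlin _ hsn, ← AddCircle.coe_nsmul]
  congr 1
  have hn' : ((n:ℝ)) ≠ 0 := by positivity
  rw [nsmul_eq_mul]
  field_simp
theorem semitoric_equivariant_embedding_intertwines_momenta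
    (U₁ U₂ : Set (EuclideanSpace ℂ (Fin 2)))
    (hU₁ : IsOpen U₁) (hU₂ : IsOpen U₂) (hU₁conn : IsConnected U₁)
    (J₁ H₁ J₂ H₂ : EuclideanSpace ℂ (Fin 2) → ℝ)
    (hJ₁ : ContDiffOn ℝ (⊤ : ℕ∞) J₁ U₁) (hH₁ : ContDiffOn ℝ (⊤ : ℕ∞) H₁ U₁)
    (hJ₂ : ContDiffOn ℝ (⊤ : ℕ∞) J₂ U₂) (hH₂ : ContDiffOn ℝ (⊤ : ℕ∞) H₂ U₂)
    -- the Hamiltonian vector fields of J₁, H₁ on U₁ and of J₂, H₂ on U₂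
    (XJ₁ XH₁ XJ₂ XH₂ : EuclideanSpace ℂ (Fin 2) → EuclideanSpace ℂ (Fin 2))
    (hXJ₁ : ∀ p ∈ U₁, ∀ v, symplForm (XJ₁ p) v = -(fderiv ℝ J₁ p v))
    (hXH₁ : ∀ p ∈ U₁, ∀ v, symplForm (XH₁ p) v = -(fderiv ℝ H₁ p v))
    (hXJ₂ : ∀ p ∈ U₂, ∀ v, symplForm (XJ₂ p) v = -(fderiv ℝ J₂ p v))
    (hXH₂ : ∀ p ∈ U₂, ∀ v, symplForm (XH₂ p) v = -(fderiv ℝ H₂ p v))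
    -- the C^∞ actions of (ℝ/ℤ) × ℝ on U₁ and U₂
    (φ₁ φ₂ : (AddCircle (1 : ℝ) × ℝ) → EuclideanSpace ℂ (Fin 2) → EuclideanSpace ℂ (Fin 2))
    (hφ₁maps : ∀ g, Set.MapsTo (φ₁ g) U₁ U₁)
    (hφ₂maps : ∀ g, Set.MapsTo (φ₂ g) U₂ U₂)
    (hφ₁zero : ∀ p ∈ U₁, φ₁ 0 p = p)
    (hφ₂zero : ∀ p ∈ U₂, φ₂ 0 p = p)
    (hφ₁add : ∀ g g', ∀ p ∈ U₁, φ₁ (g + g') p = φ₁ g (φ₁ g' p))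
    (hφ₂add : ∀ g g', ∀ p ∈ U₂, φ₂ (g + g') p = φ₂ g (φ₂ g' p))
    -- smoothness of the actions (stated via the smooth covering ℝ × ℝ → (ℝ/ℤ) × ℝ)
    (hφ₁smooth : ContDiffOn ℝ (⊤ : ℕ∞)
      (fun q : (ℝ × ℝ) × EuclideanSpace ℂ (Fin 2) =>
        φ₁ ((↑q.1.1 : AddCircle (1 : ℝ)), q.1.2) q.2) (Set.univ ×ˢ U₁))
    (hφ₂smooth : ContDiffOn ℝ (⊤ : ℕ∞)
      (fun q : (ℝ × ℝ) × EuclideanSpace ℂ (Fin 2) =>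
        φ₂ ((↑q.1.1 : AddCircle (1 : ℝ)), q.1.2) q.2) (Set.univ ×ˢ U₂))
    -- the actions are the Hamiltonian flow actions of (J₁, H₁) and (J₂, H₂)
    (hflowJ₁ : ∀ p ∈ U₁,
      HasDerivAt (fun t : ℝ => φ₁ ((↑t : AddCircle (1 : ℝ)), (0 : ℝ)) p) (XJ₁ p) 0)
    (hflowH₁ : ∀ p ∈ U₁,
      HasDerivAt (fun s : ℝ => φ₁ ((0 : AddCircle (1 : ℝ)), s) p) (XH₁ p) 0)
    (hflowJ₂ : ∀ p ∈ U₂,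
      HasDerivAt (fun t : ℝ => φ₂ ((↑t : AddCircle (1 : ℝ)), (0 : ℝ)) p) (XJ₂ p) 0)
    (hflowH₂ : ∀ p ∈ U₂,
      HasDerivAt (fun s : ℝ => φ₂ ((0 : AddCircle (1 : ℝ)), s) p) (XH₂ p) 0)
    -- ρ is a symplectic (S¹ × ℝ)-embedding with respect to an automorphism Λ
    (ρ : EuclideanSpace ℂ (Fin 2) → EuclideanSpace ℂ (Fin 2))
    (hρsmooth : ContDiffOn ℝ (⊤ : ℕ∞) ρ U₁)
    (hρinj : Set.InjOn ρ U₁)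
    (hρmaps : Set.MapsTo ρ U₁ U₂)
    (hρsymp : ∀ z ∈ U₁, ∀ u v : EuclideanSpace ℂ (Fin 2),
      symplForm (fderiv ℝ ρ z u) (fderiv ℝ ρ z v) = symplForm u v)
    (Λ : (AddCircle (1 : ℝ) × ℝ) ≃+ (AddCircle (1 : ℝ) × ℝ))
    (hΛ : Continuous Λ) (hΛsymm : Continuous Λ.symm)
    (hequiv : ∀ g, ∀ p ∈ U₁, ρ (φ₁ g p) = φ₂ (Λ g) (ρ p)) :
    ∃ e : ℝ, (e = 1 ∨ e = -1) ∧
      ∃ a b cJ cH : ℝ, b ≠ 0 ∧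
        ∀ p ∈ U₁, J₂ (ρ p) = e * J₁ p + cJ ∧
          H₂ (ρ p) = a * J₁ p + b * H₁ p + cH := by
  haveI : Fact ((0:ℝ) < 1) := ⟨one_pos⟩
  have hcoe : Continuous (fun t : ℝ => ((t : AddCircle (1:ℝ)))) :=
    AddCircle.continuous_mk' 1
  -- structure of Λ on the circle factor
  have hmk : ∀ x y : ℝ, ((((x+y:ℝ)) : AddCircle (1:ℝ)), (0:ℝ)) =
      (((x:ℝ) : AddCircle (1:ℝ)), (0:ℝ)) + (((y:ℝ) : AddCircle (1:ℝ)), (0:ℝ)) := by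
    intro x y
    rw [Prod.mk_add_mk, AddCircle.coe_add, add_zero]
  have hmk2 : ∀ x y : ℝ, ((0 : AddCircle (1:ℝ)), x + y) =
      ((0 : AddCircle (1:ℝ)), x) + ((0 : AddCircle (1:ℝ)), y) := by
    intro x y
    rw [Prod.mk_add_mk, add_zero]
  -- component homs for Λ along the circle direction
  set c1 : ℝ →+ AddCircle (1:ℝ) :=
    AddMonoidHom.mk' (fun t => (Λ (((t:ℝ) : AddCircle (1:ℝ)), (0:ℝ))).1)
      (by intro x y; rw [hmk, map_add]; rfl) with hc1def
  have hc1cont : Continuous c1 :=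
    continuous_fst.comp (hΛ.comp (hcoe.prodMk continuous_const))
  obtain ⟨e, he⟩ := circle_hom_lift c1 hc1cont
  have he' : ∀ t : ℝ, (Λ (((t:ℝ) : AddCircle (1:ℝ)), (0:ℝ))).1 = (((e*t : ℝ)) : AddCircle (1:ℝ)) :=
    fun t => he t
  set c2 : ℝ →+ ℝ :=
    AddMonoidHom.mk' (fun t => (Λ (((t:ℝ) : AddCircle (1:ℝ)), (0:ℝ))).2)
      (by intro x y; rw [hmk, map_add]; rfl) with hc2def
  have hc2cont : Continuous c2 :=
    continuous_snd.comp (hΛ.comp (hcoe.prodMk continuous_const))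
  have hone : (((1:ℝ)) : AddCircle (1:ℝ)) = 0 := AddCircle.coe_period 1
  have hΛzero1 : Λ ((((1:ℝ)) : AddCircle (1:ℝ)), (0:ℝ)) = 0 := by
    rw [hone]
    exact map_zero Λ
  have hc2zero : ∀ t : ℝ, (Λ (((t:ℝ) : AddCircle (1:ℝ)), (0:ℝ))).2 = 0 := by
    intro t
    have h := real_addHom_eq c2 hc2cont t
    have h1 : c2 1 = 0 := by
      show (Λ ((((1:ℝ)) : AddCircle (1:ℝ)), (0:ℝ))).2 = 0
      rw [hΛzero1]; rfl
    have : c2 t = 0 := by rw [h, h1, zero_mul]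
    exact this
  have hΛJ : ∀ t : ℝ, Λ (((t:ℝ) : AddCircle (1:ℝ)), (0:ℝ)) =
      ((((e*t : ℝ)) : AddCircle (1:ℝ)), (0:ℝ)) := by
    intro t
    exact Prod.ext (he' t) (hc2zero t)
  -- e is an integer
  have heint : ∃ n : ℤ, (n:ℝ) = e := by
    have h1 : (((e*1 : ℝ)) : AddCircle (1:ℝ)) = 0 := by
      rw [← he' 1, hΛzero1]; rfl
    obtain ⟨n, hn⟩ := (AddCircle.coe_eq_zero_iff (1:ℝ)).mp h1
    exact ⟨n, by simpa using hn⟩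
  -- same for Λ.symm
  set d1 : ℝ →+ AddCircle (1:ℝ) :=
    AddMonoidHom.mk' (fun t => (Λ.symm (((t:ℝ) : AddCircle (1:ℝ)), (0:ℝ))).1)
      (by intro x y; rw [hmk, map_add]; rfl) with hd1def
  have hd1cont : Continuous d1 :=
    continuous_fst.comp (hΛsymm.comp (hcoe.prodMk continuous_const))
  obtain ⟨e', he2⟩ := circle_hom_lift d1 hd1cont
  have he2' : ∀ t : ℝ, (Λ.symm (((t:ℝ) : AddCircle (1:ℝ)), (0:ℝ))).1
      = (((e'*t : ℝ)) : AddCircle (1:ℝ)) := fun t => he2 t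
  have he'int : ∃ n : ℤ, (n:ℝ) = e' := by
    have hzero1 : Λ.symm ((((1:ℝ)) : AddCircle (1:ℝ)), (0:ℝ)) = 0 := by
      rw [hone]; exact map_zero Λ.symm
    have h1 : (((e'*1 : ℝ)) : AddCircle (1:ℝ)) = 0 := by
      rw [← he2' 1, hzero1]; rfl
    obtain ⟨n, hn⟩ := (AddCircle.coe_eq_zero_iff (1:ℝ)).mp h1
    exact ⟨n, by simpa using hn⟩
  -- e * e' = 1, hence e = ± 1
  have hee' : e' * e = 1 := by
    by_contra hne
    have hcomp : ∀ t : ℝ, (((e' * (e * t) - t : ℝ)) : AddCircle (1:ℝ)) = 0 := by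
      intro t
      have h1 : (((t:ℝ) : AddCircle (1:ℝ)), (0:ℝ)) = Λ.symm (Λ (((t:ℝ) : AddCircle (1:ℝ)), (0:ℝ))) :=
        (Λ.symm_apply_apply _).symm
      rw [hΛJ t] at h1
      have h2 : ((t:ℝ) : AddCircle (1:ℝ)) = (((e' * (e*t) : ℝ)) : AddCircle (1:ℝ)) := by
        have := congrArg Prod.fst h1
        rwa [he2' (e*t)] at this
      rw [AddCircle.coe_sub, ← h2, sub_self]
    set cc : ℝ := e' * e - 1 with hcc
    have hccne : cc ≠ 0 := fun h => hne (by rw [hcc] at h; linarith)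
    have h3 := hcomp (1/(2*cc))
    have h4 : e' * (e * (1/(2*cc))) - 1/(2*cc) = 1/2 := by
      field_simp
      ring
    rw [h4] at h3
    obtain ⟨m, hm⟩ := (AddCircle.coe_eq_zero_iff (1:ℝ)).mp h3
    have hm' : (m:ℝ) = 1/2 := by simpa using hm
    have : (2*m : ℤ) = 1 := by
      have : ((2*m : ℤ) : ℝ) = 1 := by push_cast; linarith
      exact_mod_cast this
    omega
  obtain ⟨n, hn⟩ := heint
  obtain ⟨n', hn'⟩ := he'int
  have hnn' : n' * n = 1 := by
    have : ((n' * n : ℤ) : ℝ) = 1 := by push_cast; rw [hn, hn']; exact hee'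
    exact_mod_cast this
  have hepm : e = 1 ∨ e = -1 := by
    rcases Int.eq_one_or_neg_one_of_mul_eq_one' hnn' with ⟨h1, h2⟩ | ⟨h1, h2⟩
    · left; rw [← hn, h2]; norm_num
    · right; rw [← hn, h2]; norm_num
  have he2one : e * e = 1 := by rcases hepm with h | h <;> rw [h] <;> norm_num
  -- structure of Λ on the ℝ factor
  set f1 : ℝ →+ AddCircle (1:ℝ) :=
    AddMonoidHom.mk' (fun s => (Λ ((0 : AddCircle (1:ℝ)), s)).1)
      (by intro x y; rw [hmk2, map_add]; rfl) with hf1def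
  have hf1cont : Continuous f1 :=
    continuous_fst.comp (hΛ.comp (continuous_const.prodMk continuous_id))
  obtain ⟨a₀, ha₀⟩ := circle_hom_lift f1 hf1cont
  have ha₀' : ∀ s : ℝ, (Λ ((0 : AddCircle (1:ℝ)), s)).1 = (((a₀*s : ℝ)) : AddCircle (1:ℝ)) :=
    fun s => ha₀ s
  set f2 : ℝ →+ ℝ :=
    AddMonoidHom.mk' (fun s => (Λ ((0 : AddCircle (1:ℝ)), s)).2)
      (by intro x y; rw [hmk2, map_add]; rfl) with hf2def
  have hf2cont : Continuous f2 :=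
    continuous_snd.comp (hΛ.comp (continuous_const.prodMk continuous_id))
  set b : ℝ := (Λ ((0 : AddCircle (1:ℝ)), 1)).2 with hbdef
  have hb' : ∀ s : ℝ, (Λ ((0 : AddCircle (1:ℝ)), s)).2 = b * s := by
    intro s
    have h := real_addHom_eq f2 hf2cont s
    exact h
  have hΛH : ∀ s : ℝ, Λ ((0 : AddCircle (1:ℝ)), s) =
      ((((a₀*s : ℝ)) : AddCircle (1:ℝ)), b * s) := by
    intro s
    exact Prod.ext (ha₀' s) (hb' s)
  -- b ≠ 0
  have hbne : b ≠ 0 := by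
    intro hb0
    have hall : ∀ x : AddCircle (1:ℝ) × ℝ, (Λ x).2 = 0 := by
      rintro ⟨x1, x2⟩
      have hx : ((x1, x2) : AddCircle (1:ℝ) × ℝ) = (x1, (0:ℝ)) + ((0 : AddCircle (1:ℝ)), x2) := by
        rw [Prod.mk_add_mk, add_zero, zero_add]
      rw [hx, map_add]
      have h1 : (Λ (x1, (0:ℝ))).2 = 0 := by
        induction x1 using QuotientAddGroup.induction_on with
        | H t => exact hc2zero t
      have h2 : (Λ ((0 : AddCircle (1:ℝ)), x2)).2 = 0 := by
        rw [hb' x2, hb0, zero_mul]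
      show (Λ (x1, (0:ℝ))).2 + (Λ ((0 : AddCircle (1:ℝ)), x2)).2 = 0
      rw [h1, h2, add_zero]
    have h1 : (Λ (Λ.symm ((0 : AddCircle (1:ℝ)), (1:ℝ)))).2 = (1:ℝ) := by
      rw [Λ.apply_symm_apply]
    rw [hall _] at h1
    norm_num at h1
  -- differentiability facts
  have hρdiff : ∀ p ∈ U₁, DifferentiableAt ℝ ρ p := fun p hp =>
    (hρsmooth.contDiffAt (hU₁.mem_nhds hp)).differentiableAt (by simp)
  have hJ₁diff : ∀ p ∈ U₁, DifferentiableAt ℝ J₁ p := fun p hp =>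
    (hJ₁.contDiffAt (hU₁.mem_nhds hp)).differentiableAt (by simp)
  have hH₁diff : ∀ p ∈ U₁, DifferentiableAt ℝ H₁ p := fun p hp =>
    (hH₁.contDiffAt (hU₁.mem_nhds hp)).differentiableAt (by simp)
  have hJ₂diff : ∀ q ∈ U₂, DifferentiableAt ℝ J₂ q := fun q hq =>
    (hJ₂.contDiffAt (hU₂.mem_nhds hq)).differentiableAt (by simp)
  have hH₂diff : ∀ q ∈ U₂, DifferentiableAt ℝ H₂ q := fun q hq =>
    (hH₂.contDiffAt (hU₂.mem_nhds hq)).differentiableAt (by simp)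
  -- the composite derivative identities
  have hident : ∀ p ∈ U₁,
      fderiv ℝ ρ p (XJ₁ p) = e • XJ₂ (ρ p) ∧
      fderiv ℝ ρ p (XH₁ p) = a₀ • XJ₂ (ρ p) + b • XH₂ (ρ p) := by
    intro p hp
    have hq : ρ p ∈ U₂ := hρmaps hp
    have hρfd : HasFDerivAt ρ (fderiv ℝ ρ p) p := (hρdiff p hp).hasFDerivAt
    -- left sides
    have hz1 : φ₁ ((((0:ℝ)) : AddCircle (1:ℝ)), (0:ℝ)) p = p := by
      rw [show ((((0:ℝ)) : AddCircle (1:ℝ)), (0:ℝ)) = (0 : AddCircle (1:ℝ) × ℝ) by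
        rw [QuotientAddGroup.mk_zero]; rfl]
      exact hφ₁zero p hp
    have hρfd1 : HasFDerivAt ρ (fderiv ℝ ρ p) (φ₁ ((((0:ℝ)) : AddCircle (1:ℝ)), (0:ℝ)) p) := by
      rw [hz1]; exact hρfd
    have hLJ : HasDerivAt (fun t : ℝ => ρ (φ₁ (((t:ℝ) : AddCircle (1:ℝ)), (0:ℝ)) p))
        (fderiv ℝ ρ p (XJ₁ p)) 0 :=
      HasFDerivAt.comp_hasDerivAt (f := fun t : ℝ => φ₁ (((t:ℝ) : AddCircle (1:ℝ)), (0:ℝ)) p)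
        0 hρfd1 (hflowJ₁ p hp)
    have hz2 : φ₁ ((0 : AddCircle (1:ℝ)), (0:ℝ)) p = p := hφ₁zero p hp
    have hρfd2 : HasFDerivAt ρ (fderiv ℝ ρ p) (φ₁ ((0 : AddCircle (1:ℝ)), (0:ℝ)) p) := by
      rw [hz2]; exact hρfd
    have hLH : HasDerivAt (fun s : ℝ => ρ (φ₁ ((0 : AddCircle (1:ℝ)), s) p))
        (fderiv ℝ ρ p (XH₁ p)) 0 :=
      HasFDerivAt.comp_hasDerivAt (f := fun s : ℝ => φ₁ ((0 : AddCircle (1:ℝ)), s) p)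
        0 hρfd2 (hflowH₁ p hp)
    -- right side for J
    have hRJbase : HasDerivAt (fun u : ℝ => φ₂ (((u:ℝ) : AddCircle (1:ℝ)), (0:ℝ)) (ρ p))
        (XJ₂ (ρ p)) (e * 0) := by
      rw [mul_zero]; exact hflowJ₂ (ρ p) hq
    have hmul : HasDerivAt (fun t : ℝ => e * t) e 0 := by
      simpa using (hasDerivAt_id (0:ℝ)).const_mul e
    have hRJ : HasDerivAt (fun t : ℝ => φ₂ ((((e*t:ℝ)) : AddCircle (1:ℝ)), (0:ℝ)) (ρ p))
        (e • XJ₂ (ρ p)) 0 :=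
      HasDerivAt.scomp (h := fun t : ℝ => e * t) 0 hRJbase hmul
    -- right side for H
    have hGdiff : DifferentiableAt ℝ
        (fun x : (ℝ × ℝ) × EuclideanSpace ℂ (Fin 2) =>
          φ₂ ((↑x.1.1 : AddCircle (1:ℝ)), x.1.2) x.2) ((((0:ℝ),(0:ℝ)) : ℝ × ℝ), ρ p) := by
      refine (hφ₂smooth.contDiffAt ?_).differentiableAt (by simp)
      exact (isOpen_univ.prod hU₂).mem_nhds (Set.mem_prod.mpr ⟨trivial, hq⟩)
    have hFdiff : DifferentiableAt ℝ
        (fun uv : ℝ × ℝ => φ₂ ((↑uv.1 : AddCircle (1:ℝ)), uv.2) (ρ p)) ((0:ℝ),(0:ℝ)) := by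
      have hpair : DifferentiableAt ℝ
          (fun uv : ℝ × ℝ => ((uv, ρ p) : (ℝ × ℝ) × EuclideanSpace ℂ (Fin 2))) ((0:ℝ),(0:ℝ)) :=
        differentiableAt_id.prodMk (differentiableAt_const _)
      exact hGdiff.comp ((0:ℝ),(0:ℝ)) hpair
    have hXpart : HasDerivAt
        (fun t : ℝ => φ₂ (((t:ℝ) : AddCircle (1:ℝ)), (0:ℝ)) (ρ p)) (XJ₂ (ρ p)) 0 :=
      hflowJ₂ (ρ p) hq
    have hYpart : HasDerivAt
        (fun s : ℝ => φ₂ ((((0:ℝ)) : AddCircle (1:ℝ)), s) (ρ p)) (XH₂ (ρ p)) 0 := by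
      rw [show (((0:ℝ)) : AddCircle (1:ℝ)) = 0 from QuotientAddGroup.mk_zero _]
      exact hflowH₂ (ρ p) hq
    have hRH : HasDerivAt (fun s : ℝ => φ₂ ((((a₀*s:ℝ)) : AddCircle (1:ℝ)), b*s) (ρ p))
        (a₀ • XJ₂ (ρ p) + b • XH₂ (ρ p)) 0 :=
      hasDerivAt_combo (F := fun uv : ℝ × ℝ => φ₂ ((↑uv.1 : AddCircle (1:ℝ)), uv.2) (ρ p))
        hFdiff a₀ b hXpart hYpart
    -- function equalities from equivariance
    have hfeqJ : (fun t : ℝ => ρ (φ₁ (((t:ℝ) : AddCircle (1:ℝ)), (0:ℝ)) p)) =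
        fun t : ℝ => φ₂ ((((e*t:ℝ)) : AddCircle (1:ℝ)), (0:ℝ)) (ρ p) := by
      funext t
      rw [hequiv _ p hp, hΛJ t]
    have hfeqH : (fun s : ℝ => ρ (φ₁ ((0 : AddCircle (1:ℝ)), s) p)) =
        fun s : ℝ => φ₂ ((((a₀*s:ℝ)) : AddCircle (1:ℝ)), b*s) (ρ p) := by
      funext s
      rw [hequiv _ p hp, hΛH s]
    rw [hfeqJ] at hLJ
    rw [hfeqH] at hLH
    exact ⟨hLJ.unique hRJ, hLH.unique hRH⟩
  -- pointwise derivative relations for the momenta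
  have hkeyJ : ∀ p ∈ U₁, ∀ v, fderiv ℝ J₁ p v = e * (fderiv ℝ (fun x => J₂ (ρ x)) p v) := by
    intro p hp v
    have hq : ρ p ∈ U₂ := hρmaps hp
    have h1 := (hident p hp).1
    have s2 := hρsymp p hp (XJ₁ p) v
    rw [h1, symplForm_smul_left, hXJ₂ (ρ p) hq (fderiv ℝ ρ p v), hXJ₁ p hp v] at s2
    have hchain : fderiv ℝ (fun x => J₂ (ρ x)) p =
        (fderiv ℝ J₂ (ρ p)).comp (fderiv ℝ ρ p) :=
      fderiv_comp (x := p) (hJ₂diff _ hq) (hρdiff p hp)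
    rw [hchain]
    simp only [ContinuousLinearMap.comp_apply]
    linarith [s2]
  have hkeyH : ∀ p ∈ U₁, ∀ v, fderiv ℝ H₁ p v =
      a₀ * (fderiv ℝ (fun x => J₂ (ρ x)) p v) + b * (fderiv ℝ (fun x => H₂ (ρ x)) p v) := by
    intro p hp v
    have hq : ρ p ∈ U₂ := hρmaps hp
    have h2 := (hident p hp).2
    have s2 := hρsymp p hp (XH₁ p) v
    rw [h2, symplForm_add_left, symplForm_smul_left, symplForm_smul_left,
      hXJ₂ (ρ p) hq (fderiv ℝ ρ p v), hXH₂ (ρ p) hq (fderiv ℝ ρ p v), hXH₁ p hp v] at s2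
    have hchainJ : fderiv ℝ (fun x => J₂ (ρ x)) p =
        (fderiv ℝ J₂ (ρ p)).comp (fderiv ℝ ρ p) :=
      fderiv_comp (x := p) (hJ₂diff _ hq) (hρdiff p hp)
    have hchainH : fderiv ℝ (fun x => H₂ (ρ x)) p =
        (fderiv ℝ H₂ (ρ p)).comp (fderiv ℝ ρ p) :=
      fderiv_comp (x := p) (hH₂diff _ hq) (hρdiff p hp)
    rw [hchainJ, hchainH]
    simp only [ContinuousLinearMap.comp_apply]
    linarith [s2]
  -- constancy of the differences
  have hJρdiff : ∀ p ∈ U₁, DifferentiableAt ℝ (fun x => J₂ (ρ x)) p := fun p hp =>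
    (hJ₂diff _ (hρmaps hp)).comp p (hρdiff p hp)
  have hHρdiff : ∀ p ∈ U₁, DifferentiableAt ℝ (fun x => H₂ (ρ x)) p := fun p hp =>
    (hH₂diff _ (hρmaps hp)).comp p (hρdiff p hp)
  set A : ℝ := -(a₀ * e) / b with hAdef
  set B : ℝ := b⁻¹ with hBdef
  have hBne : B ≠ 0 := inv_ne_zero hbne
  set fJ : EuclideanSpace ℂ (Fin 2) → ℝ := fun x => J₂ (ρ x) - e * J₁ x with hfJdef
  set fH : EuclideanSpace ℂ (Fin 2) → ℝ := fun x => H₂ (ρ x) - A * J₁ x - B * H₁ x with hfHdef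
  have hfJdiff : ∀ p ∈ U₁, DifferentiableAt ℝ fJ p := fun p hp =>
    (hJρdiff p hp).sub ((hJ₁diff p hp).const_mul e)
  have hfHdiff : ∀ p ∈ U₁, DifferentiableAt ℝ fH p := fun p hp =>
    ((hHρdiff p hp).sub ((hJ₁diff p hp).const_mul A)).sub ((hH₁diff p hp).const_mul B)
  have hfJzero : ∀ p ∈ U₁, fderiv ℝ fJ p = 0 := by
    intro p hp
    ext v
    rw [hfJdef]
    rw [fderiv_fun_sub (hJρdiff p hp) ((hJ₁diff p hp).const_mul e)]
    rw [fderiv_const_mul (hJ₁diff p hp) e]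
    simp only [ContinuousLinearMap.sub_apply, ContinuousLinearMap.smul_apply,
      ContinuousLinearMap.zero_apply, smul_eq_mul]
    rw [hkeyJ p hp v]
    rw [show e * (e * fderiv ℝ (fun x => J₂ (ρ x)) p v) =
      (e * e) * fderiv ℝ (fun x => J₂ (ρ x)) p v by ring, he2one, one_mul, sub_self]
  have hfHzero : ∀ p ∈ U₁, fderiv ℝ fH p = 0 := by
    intro p hp
    ext v
    rw [hfHdef]
    rw [fderiv_fun_sub (f := fun x => H₂ (ρ x) - A * J₁ x) ((hHρdiff p hp).sub ((hJ₁diff p hp).const_mul A))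
      ((hH₁diff p hp).const_mul B)]
    rw [fderiv_fun_sub (hHρdiff p hp) ((hJ₁diff p hp).const_mul A)]
    rw [fderiv_const_mul (hJ₁diff p hp) A, fderiv_const_mul (hH₁diff p hp) B]
    simp only [ContinuousLinearMap.sub_apply, ContinuousLinearMap.smul_apply,
      ContinuousLinearMap.zero_apply, smul_eq_mul]
    have hJrel : fderiv ℝ (fun x => J₂ (ρ x)) p v = e * fderiv ℝ J₁ p v := by
      rw [hkeyJ p hp v, ← mul_assoc, he2one, one_mul]
    have hHrel := hkeyH p hp v
    rw [hJrel] at hHrel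
    rw [hAdef, hBdef]
    field_simp
    linarith [hHrel]
  obtain ⟨p₀, hp₀⟩ := hU₁conn.nonempty
  have hconstJ : ∀ p ∈ U₁, fJ p = fJ p₀ := fun p hp =>
    const_on_preconnected hU₁ hU₁conn.isPreconnected hfJdiff hfJzero hp hp₀
  have hconstH : ∀ p ∈ U₁, fH p = fH p₀ := fun p hp =>
    const_on_preconnected hU₁ hU₁conn.isPreconnected hfHdiff hfHzero hp hp₀
  refine ⟨e, hepm, A, B, fJ p₀, fH p₀, hBne, fun p hp => ⟨?_, ?_⟩⟩
  · have h2 : J₂ (ρ p) - e * J₁ p = fJ p₀ := hconstJ p hp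
    linarith
  · have h2 : H₂ (ρ p) - A * J₁ p - B * H₁ p = fH p₀ := hconstH p hp
    linarith
end
end

section
/- Lemma 6.4 (smooth angles are discrete): call θ ∈ (0, π) a smooth angle if there exist u, v ∈ ℤ² with det(u,v) = 1 such that the angle between u and v (viewed as vectors in ℝ²) equals θ (these are exactly the angles occurring at a vertex of a Delzant polygon). Then the set S of smooth angles is discrete in (0, π): for every θ ∈ S there exists ε > 0 such that S ∩ (θ − ε, θ + ε) = {θ}. -/
/-!
Statement 8 (Lemma 6.4): the set of smooth angles—angles between u, v ∈ ℤ² with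
det(u,v) = 1—is discrete in (0, π).
-/

noncomputable section

/-- `det(u,v) = u₁v₂ − u₂v₁` for `u, v ∈ ℤ²`. -/
def detZ (u v : ℤ × ℤ) : ℤ := u.1 * v.2 - u.2 * v.1

/-- The Euclidean norm of `u ∈ ℤ²` viewed in `ℝ²`. -/
def normZ (u : ℤ × ℤ) : ℝ := Real.sqrt ((u.1 : ℝ) ^ 2 + (u.2 : ℝ) ^ 2)

/-- The angle `arccos(⟪u,v⟫/(‖u‖·‖v‖)) ∈ [0, π]` between `u, v ∈ ℤ²` viewed in `ℝ²`. -/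
def angleZ (u v : ℤ × ℤ) : ℝ :=
  Real.arccos (((u.1 * v.1 + u.2 * v.2 : ℤ) : ℝ) / (normZ u * normZ v))

/-- `θ ∈ (0, π)` is a smooth angle if it is the angle between some `u, v ∈ ℤ²` with
`det(u,v) = 1`. -/
def IsSmoothAngle (θ : ℝ) : Prop :=
  θ ∈ Set.Ioo 0 Real.pi ∧ ∃ u v : ℤ × ℤ, detZ u v = 1 ∧ angleZ u v = θ

/-- The cotangent of a smooth angle is an integer. -/
lemma cot_eq_int {θ : ℝ} (h : IsSmoothAngle θ) :
    ∃ n : ℤ, Real.cos θ / Real.sin θ = n := by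
  obtain ⟨hθ, u, v, hdet, hang⟩ := h
  refine ⟨u.1 * v.1 + u.2 * v.2, ?_⟩
  set a : ℝ := (u.1 : ℝ)
  set b : ℝ := (u.2 : ℝ)
  set c : ℝ := (v.1 : ℝ)
  set d : ℝ := (v.2 : ℝ)
  have hdetR : a * d - b * c = 1 := by
    have := congrArg (Int.cast : ℤ → ℝ) hdet
    unfold detZ at this
    push_cast at this
    linarith
  set N : ℝ := normZ u * normZ v with hNdef
  have hN2 : N ^ 2 = (a * c + b * d) ^ 2 + 1 := by
    have h1 : (normZ u) ^ 2 = a ^ 2 + b ^ 2 := by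
      rw [normZ, Real.sq_sqrt (by positivity)]
    have h2 : (normZ v) ^ 2 = c ^ 2 + d ^ 2 := by
      rw [normZ, Real.sq_sqrt (by positivity)]
    have : N ^ 2 = (a ^ 2 + b ^ 2) * (c ^ 2 + d ^ 2) := by
      rw [hNdef, mul_pow, h1, h2]
    nlinarith [this, hdetR]
  have hNnonneg : 0 ≤ N := mul_nonneg (Real.sqrt_nonneg _) (Real.sqrt_nonneg _)
  have hNpos : 0 < N := by
    rcases hNnonneg.lt_or_eq with h | h
    · exact h
    · exfalso; rw [← h] at hN2; nlinarith
  set x : ℝ := (a * c + b * d) / N with hxdef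
  have hang' : Real.arccos x = θ := by
    rw [← hang, angleZ]
    push_cast
    rfl
  have hx2 : x ^ 2 ≤ 1 := by
    rw [hxdef, div_pow]
    rw [div_le_one (by positivity)]
    nlinarith
  have hcos : Real.cos θ = x := by
    rw [← hang', Real.cos_arccos (by nlinarith [sq_nonneg (x + 1)]) (by nlinarith [sq_nonneg (x - 1)])]
  have hsin : Real.sin θ = 1 / N := by
    rw [← hang', Real.sin_arccos]
    have : 1 - x ^ 2 = 1 / N ^ 2 := by
      rw [hxdef, div_pow]
      field_simp
      nlinarith
    rw [this, one_div, Real.sqrt_inv, Real.sqrt_sq hNpos.le, one_div]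
  rw [hcos, hsin, hxdef]
  push_cast
  field_simp
  rfl

/-- The set of smooth angles is discrete in `(0, π)`. -/
theorem smoothAngles_discrete :
    ∀ θ : ℝ, IsSmoothAngle θ →
      ∃ ε > 0, {θ' : ℝ | IsSmoothAngle θ'} ∩ Set.Ioo (θ - ε) (θ + ε) = {θ} := by
  intro θ hθ
  obtain ⟨n, hn⟩ := cot_eq_int hθ
  have hsinθ : Real.sin θ ≠ 0 :=
    (Real.sin_pos_of_pos_of_lt_pi hθ.1.1 hθ.1.2).ne'
  have hc : ContinuousAt (fun x => Real.cos x / Real.sin x) θ :=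
    Real.continuous_cos.continuousAt.div Real.continuous_sin.continuousAt hsinθ
  obtain ⟨ε, hε, hball⟩ := Metric.continuousAt_iff.mp hc 1 one_pos
  refine ⟨ε, hε, ?_⟩
  ext θ'
  simp only [Set.mem_inter_iff, Set.mem_setOf_eq, Set.mem_Ioo, Set.mem_singleton_iff]
  constructor
  · rintro ⟨hθ', h1, h2⟩
    obtain ⟨m, hm⟩ := cot_eq_int hθ'
    have hd : dist θ' θ < ε := by
      rw [Real.dist_eq, abs_lt]; constructor <;> linarith
    have hcl := hball hd
    simp only [Real.dist_eq, hm, hn] at hcl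
    have hmn : m = n := by
      have h2' : |(m : ℝ) - (n : ℝ)| < 1 := hcl
      have h4 : ((|m - n| : ℤ) : ℝ) < 1 := by
        rw [Int.cast_abs]; push_cast; exact h2'
      have h5 : |m - n| < 1 := by exact_mod_cast h4
      have h6 := abs_lt.mp h5
      omega
    have hsinθ' : Real.sin θ' ≠ 0 :=
      (Real.sin_pos_of_pos_of_lt_pi hθ'.1.1 hθ'.1.2).ne'
    have hcot : Real.cos θ' / Real.sin θ' = Real.cos θ / Real.sin θ := by
      rw [hm, hn, hmn]
    have hcross : Real.cos θ' * Real.sin θ = Real.cos θ * Real.sin θ' := by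
      field_simp at hcot
      linarith
    have hsin0 : Real.sin (θ - θ') = 0 := by
      rw [Real.sin_sub]; nlinarith [hcross]
    obtain ⟨k, hk⟩ := Real.sin_eq_zero_iff.mp hsin0
    have hpi := Real.pi_pos
    obtain ⟨ha1, ha2⟩ := Set.mem_Ioo.mp hθ.1
    obtain ⟨hb1', hb2'⟩ := Set.mem_Ioo.mp hθ'.1
    have hb1 : θ - θ' < Real.pi := by linarith
    have hb2 : -Real.pi < θ - θ' := by linarith
    have hk0 : k = 0 := by
      by_contra hk0
      rcases lt_or_gt_of_ne hk0 with h | h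
      · have : (k : ℝ) ≤ -1 := by exact_mod_cast (by omega : k ≤ -1)
        nlinarith [hk]
      · have : (1 : ℝ) ≤ (k : ℝ) := by exact_mod_cast h
        nlinarith [hk]
    rw [hk0] at hk
    simp at hk
    linarith
  · rintro rfl
    exact ⟨hθ, by linarith, by linarith⟩
end
end

section
/- Finiteness of unimodular integer pairs with angle bounded away from 0 and π (used in the proof of Lemma 6.4): for every δ with 0 < δ ≤ π/2, the set of pairs (u, v) ∈ ℤ² × ℤ² such that det(u,v) = 1 and the angle between u and v lies in the interval [δ, π − δ] is finite. -/
/-!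
Statement 11: for 0 < δ ≤ π/2, the set of pairs (u,v) ∈ ℤ² × ℤ² with det(u,v) = 1 and
angle between u and v in [δ, π − δ] is finite.
-/

noncomputable section

lemma sq_bound_mem_Icc (N x : ℤ) (h : x ^ 2 ≤ N) : x ∈ Set.Icc (-N) N := by
  have habs : |x| ≤ x ^ 2 := by
    rcases eq_or_ne x 0 with rfl | h0
    · simp
    · nlinarith [Int.one_le_abs h0, sq_abs x]
  exact Set.mem_Icc.mpr (abs_le.mp (habs.trans h))

set_option maxHeartbeats 2000000 in
/-- Finiteness of unimodular integer pairs with angle bounded away from 0 and π. -/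
theorem finite_unimodular_pairs_with_angle_bounded (δ : ℝ) (hδ0 : 0 < δ)
    (hδ : δ ≤ Real.pi / 2) :
    {p : (ℤ × ℤ) × (ℤ × ℤ) |
      detZ p.1 p.2 = 1 ∧ angleZ p.1 p.2 ∈ Set.Icc δ (Real.pi - δ)}.Finite := by
  have hπ := Real.pi_pos
  have hδπ : δ < Real.pi := by linarith
  have hs : 0 < Real.sin δ := Real.sin_pos_of_pos_of_lt_pi hδ0 hδπ
  have hcosδ : 0 ≤ Real.cos δ := Real.cos_nonneg_of_mem_Icc ⟨by linarith, hδ⟩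
  set N : ℤ := ⌈1 / Real.sin δ ^ 2⌉ with hN
  clear_value N
  apply Set.Finite.subset
    (((Set.finite_Icc (-N) N).prod (Set.finite_Icc (-N) N)).prod
      ((Set.finite_Icc (-N) N).prod (Set.finite_Icc (-N) N)))
  rintro ⟨⟨a, b⟩, ⟨c, d⟩⟩ ⟨hdet, hang1, hang2⟩
  simp only [detZ] at hdet
  have hdR : (a : ℝ) * d - b * c = 1 := by exact_mod_cast hdet
  set DR : ℝ := (a : ℝ) * c + b * d with hDR
  set AR : ℝ := (a : ℝ) ^ 2 + (b : ℝ) ^ 2 with hAR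
  set BR : ℝ := (c : ℝ) ^ 2 + (d : ℝ) ^ 2 with hBR
  have hLag : DR ^ 2 + 1 = AR * BR := by
    rw [hDR, hAR, hBR]
    linear_combination (-(1 + ((a : ℝ) * d - b * c))) * hdR
  -- u ≠ 0 and v ≠ 0
  have hab : a ≠ 0 ∨ b ≠ 0 := by
    by_contra h
    push_neg at h
    rw [h.1, h.2] at hdet; simp at hdet
  have hcd' : c ≠ 0 ∨ d ≠ 0 := by
    by_contra h
    push_neg at h
    rw [h.1, h.2] at hdet; simp at hdet
  have hAZ : (1 : ℤ) ≤ a ^ 2 + b ^ 2 := by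
    rcases hab with h | h <;> nlinarith [Int.one_le_abs h, sq_abs a, sq_abs b, sq_nonneg a, sq_nonneg b]
  have hBZ : (1 : ℤ) ≤ c ^ 2 + d ^ 2 := by
    rcases hcd' with h | h <;> nlinarith [Int.one_le_abs h, sq_abs c, sq_abs d, sq_nonneg c, sq_nonneg d]
  have hA1 : (1 : ℝ) ≤ AR := by rw [hAR]; exact_mod_cast hAZ
  have hB1 : (1 : ℝ) ≤ BR := by rw [hBR]; exact_mod_cast hBZ
  set P : ℝ := Real.sqrt (AR * BR) with hPdef
  have hABpos : 0 < AR * BR := by nlinarith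
  have hPpos : 0 < P := Real.sqrt_pos.mpr hABpos
  have hP2 : P ^ 2 = AR * BR := Real.sq_sqrt hABpos.le
  have hPmul : normZ (a, b) * normZ (c, d) = P := by
    rw [hPdef, hAR, hBR]
    unfold normZ
    exact (Real.sqrt_mul (by positivity) _).symm
  clear_value DR AR BR P
  have hDRsq : DR ^ 2 ≤ P ^ 2 := by nlinarith
  have hDP : |DR| ≤ P := by
    calc |DR| = Real.sqrt (DR ^ 2) := (Real.sqrt_sq_eq_abs _).symm
      _ ≤ Real.sqrt (P ^ 2) := Real.sqrt_le_sqrt hDRsq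
      _ = P := Real.sqrt_sq hPpos.le
  have hxabs : |DR / P| ≤ 1 := by
    rw [abs_div, abs_of_pos hPpos]
    exact (div_le_one hPpos).mpr hDP
  have hx := abs_le.mp hxabs
  have hangle_eq : angleZ (a, b) (c, d) = Real.arccos (DR / P) := by
    simp only [angleZ]
    rw [hPmul, hDR]
    push_cast
    ring_nf
  have hcosθ : Real.cos (angleZ (a, b) (c, d)) = DR / P := by
    rw [hangle_eq, Real.cos_arccos hx.1 hx.2]
  -- bounds on cos
  have hθ := hang1
  have hcos_le : Real.cos (angleZ (a, b) (c, d)) ≤ Real.cos δ :=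
    Real.cos_le_cos_of_nonneg_of_le_pi hδ0.le (by linarith) hang1
  have hcos_ge : -Real.cos δ ≤ Real.cos (angleZ (a, b) (c, d)) := by
    have h := Real.cos_le_cos_of_nonneg_of_le_pi (x := angleZ (a, b) (c, d)) (by linarith)
      (by linarith : Real.pi - δ ≤ Real.pi) hang2
    rw [Real.cos_pi_sub] at h
    linarith
  have hcd2 : |DR / P| ≤ Real.cos δ := by
    rw [hcosθ] at hcos_le hcos_ge
    exact abs_le.mpr ⟨hcos_ge, hcos_le⟩
  have hDRle : |DR| ≤ Real.cos δ * P := by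
    rw [abs_div, abs_of_pos hPpos, div_le_iff₀ hPpos] at hcd2
    linarith
  have hDR2 : DR ^ 2 ≤ Real.cos δ ^ 2 * (AR * BR) := by
    have h1 : |DR| ^ 2 ≤ (Real.cos δ * P) ^ 2 := pow_le_pow_left₀ (abs_nonneg _) hDRle 2
    rw [sq_abs] at h1
    calc DR ^ 2 ≤ (Real.cos δ * P) ^ 2 := h1
      _ = Real.cos δ ^ 2 * P ^ 2 := by ring
      _ = Real.cos δ ^ 2 * (AR * BR) := by rw [hP2]
  have hsin2 : Real.sin δ ^ 2 = 1 - Real.cos δ ^ 2 := Real.sin_sq δ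
  have hABle : AR * BR ≤ 1 / Real.sin δ ^ 2 := by
    rw [le_div_iff₀ (by positivity)]
    have e1 : AR * BR * Real.sin δ ^ 2 = (DR ^ 2 + 1) * (1 - Real.cos δ ^ 2) := by
      rw [hsin2, ← hLag]
    have e2 : DR ^ 2 ≤ Real.cos δ ^ 2 * DR ^ 2 + Real.cos δ ^ 2 := by
      have := hDR2
      rw [← hLag] at this
      nlinarith [this]
    nlinarith [e1, e2]
  have hAle : AR ≤ 1 / Real.sin δ ^ 2 := by nlinarith
  have hBle : BR ≤ 1 / Real.sin δ ^ 2 := by nlinarith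
  have key : ∀ x : ℤ, (x : ℝ) ^ 2 ≤ 1 / Real.sin δ ^ 2 → x ∈ Set.Icc (-N) N := by
    intro x hxx
    apply sq_bound_mem_Icc
    have h2 : ((x ^ 2 : ℤ) : ℝ) ≤ (N : ℝ) := by
      push_cast
      rw [hN]
      exact hxx.trans (Int.le_ceil _)
    exact_mod_cast h2
  refine ⟨⟨?_, ?_⟩, ?_, ?_⟩
  · exact key a (by nlinarith [sq_nonneg (b : ℝ)])
  · exact key b (by nlinarith [sq_nonneg (a : ℝ)])
  · exact key c (by nlinarith [sq_nonneg (d : ℝ)])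
  · exact key d (by nlinarith [sq_nonneg (c : ℝ)])
end
end

section
/- Discreteness of Delzant vertex structures (key step in the proof of Theorem 6.2(2)): let n ≥ 1 and c > 0. For an n × n integer matrix A with nonzero columns v₁, …, v_n ∈ ℤ^n, let η(A) be the real n × n matrix with columns v₁/‖v₁‖, …, v_n/‖v_n‖ (each column normalized in the Euclidean norm). Then the set of n × n integer matrices A with det(A) = 1 and det(η(A)) ≥ c is finite. (Consequently, in any Delzant polytope the possible local structures at a vertex with column-normalized determinant bounded below form a finite set.) -/
/-!
Statement 12: discreteness of Delzant vertex structures. For n ≥ 1 and c > 0, the set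
of n × n integer matrices A with det(A) = 1 whose column normalization η(A) satisfies
det(η(A)) ≥ c is finite.
-/

noncomputable section

/-- The Euclidean norm of the `j`-th column of an integer matrix. -/
def colNorm {n : ℕ} (A : Matrix (Fin n) (Fin n) ℤ) (j : Fin n) : ℝ :=
  Real.sqrt (∑ i, ((A i j : ℝ)) ^ 2)

/-- The column normalization `η(A)` of an integer matrix: each column divided by its
Euclidean norm. -/
def eta {n : ℕ} (A : Matrix (Fin n) (Fin n) ℤ) : Matrix (Fin n) (Fin n) ℝ :=
  fun i j => (A i j : ℝ) / colNorm A j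

/-- The set of `n × n` integer matrices with determinant `1` and column-normalized
determinant at least `c > 0` is finite. -/
theorem finite_unimodular_matrices_with_normalized_det_bounded
    (n : ℕ) (hn : 1 ≤ n) (c : ℝ) (hc : 0 < c) :
    {A : Matrix (Fin n) (Fin n) ℤ | A.det = 1 ∧ c ≤ (eta A).det}.Finite := by
  have hfin : (Set.pi (Set.univ : Set (Fin n)) fun _ =>
      Set.pi (Set.univ : Set (Fin n)) fun _ => Set.Icc (-⌈1/c⌉) ⌈1/c⌉).Finite :=
    Set.Finite.pi fun _ => Set.Finite.pi fun _ => Set.finite_Icc _ _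
  refine Set.Finite.subset hfin ?_
  rintro (A : Matrix (Fin n) (Fin n) ℤ) ⟨hdet, heta⟩
  -- every column is nonzero
  have hcol : ∀ j, ∃ i, A i j ≠ 0 := by
    intro j
    by_contra h
    push_neg at h
    have : A.det = 0 := Matrix.det_eq_zero_of_column_eq_zero j (fun i => h i)
    rw [hdet] at this
    exact one_ne_zero this
  -- each column norm is at least 1
  have hone : ∀ j, 1 ≤ colNorm A j := by
    intro j
    obtain ⟨i, hi⟩ := hcol j
    have h1 : (1 : ℝ) ≤ ((A i j : ℝ)) ^ 2 := by
      have : (1 : ℤ) ≤ |A i j| := Int.one_le_abs hi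
      have h2 : (1 : ℝ) ≤ |(A i j : ℝ)| := by exact_mod_cast this.trans_eq (by push_cast; ring)
      calc (1:ℝ) = 1 ^ 2 := by ring
        _ ≤ |(A i j : ℝ)| ^ 2 := by
            apply pow_le_pow_left₀ zero_le_one h2
        _ = ((A i j : ℝ)) ^ 2 := sq_abs _
    have hsum : (1 : ℝ) ≤ ∑ i, ((A i j : ℝ)) ^ 2 :=
      h1.trans (Finset.single_le_sum (f := fun k => ((A k j : ℝ))^2) (fun k _ => sq_nonneg _) (Finset.mem_univ i))
    calc (1:ℝ) = Real.sqrt 1 := (Real.sqrt_one).symm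
      _ ≤ Real.sqrt _ := Real.sqrt_le_sqrt hsum
  have hpos : ∀ j, (0:ℝ) < colNorm A j := fun j => lt_of_lt_of_le one_pos (hone j)
  -- determinant factorization
  have hfact : (1 : ℝ) = (∏ j, colNorm A j) * (eta A).det := by
    have hmap : A.map (Int.cast : ℤ → ℝ) = Matrix.of fun i j => colNorm A j * eta A i j := by
      ext i j
      simp only [Matrix.map_apply, Matrix.of_apply, eta]
      rw [mul_div_cancel₀ _ (hpos j).ne']
    have := (RingHom.map_det (Int.castRingHom ℝ) A).symm
    rw [RingHom.mapMatrix_apply] at this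
    calc (1:ℝ) = ((A.det : ℤ) : ℝ) := by rw [hdet]; norm_num
      _ = (A.map (Int.cast : ℤ → ℝ)).det := this.symm
      _ = (∏ j, colNorm A j) * (eta A).det := by rw [hmap, Matrix.det_mul_row]
  have hdeta : (0:ℝ) < (eta A).det := lt_of_lt_of_le hc heta
  have hprod : (∏ j, colNorm A j) ≤ 1 / c := by
    have h1 : (∏ j, colNorm A j) = 1 / (eta A).det := by
      field_simp
      linarith [hfact]
    rw [h1]
    exact one_div_le_one_div_of_le hc heta
  -- each column norm ≤ product
  have hle : ∀ j, colNorm A j ≤ ∏ k, colNorm A k := by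
    intro j
    have herase : (1:ℝ) ≤ ∏ k ∈ Finset.univ.erase j, colNorm A k := by
      have := Finset.prod_le_prod (s := Finset.univ.erase j)
        (f := fun _ => (1:ℝ)) (g := fun k => colNorm A k)
        (fun _ _ => zero_le_one) (fun k _ => hone k)
      simpa using this
    calc colNorm A j = colNorm A j * 1 := (mul_one _).symm
      _ ≤ colNorm A j * ∏ k ∈ Finset.univ.erase j, colNorm A k := by
          exact mul_le_mul_of_nonneg_left herase (le_of_lt (hpos j))
      _ = ∏ k, colNorm A k := Finset.mul_prod_erase Finset.univ _ (Finset.mem_univ j)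
  -- entry bound
  intro i _
  intro j _
  simp only [Set.mem_Icc]
  have habs : (|A i j| : ℝ) ≤ colNorm A j := by
    have h1 : ((A i j : ℝ)) ^ 2 ≤ ∑ k, ((A k j : ℝ)) ^ 2 :=
      Finset.single_le_sum (f := fun k => ((A k j : ℝ))^2) (fun k _ => sq_nonneg _) (Finset.mem_univ i)
    calc (|A i j| : ℝ) = |(A i j : ℝ)| := by push_cast; ring
      _ = Real.sqrt (((A i j : ℝ)) ^ 2) := (Real.sqrt_sq_eq_abs _).symm
      _ ≤ colNorm A j := Real.sqrt_le_sqrt h1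
  have hfin2 : (|A i j| : ℝ) ≤ (⌈1/c⌉ : ℝ) :=
    le_trans habs (le_trans (hle j) (le_trans hprod (Int.le_ceil _)))
  have : |A i j| ≤ ⌈1/c⌉ := by exact_mod_cast hfin2
  exact abs_le.mp this
end
end
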